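/- arXiv:1203.1769 — 10 statements merged into one kernel-verified Lean document; each statement's English description precedes it below -/
import Mathlib

section
/- Let A be an m×m real symmetric matrix with eigenvalues λ₁, λ₂, ..., λ_m (counted with multiplicity) and let u be a unit eigenvector of A corresponding to λ₁. Let B be an n×n real symmetric matrix with eigenvalues μ₁, μ₂, ..., μ_n (counted with multiplicity) and let v be a unit eigenvector of B corresponding to μ₁. Then for any real ρ, the (m+n)×(m+n) block matrix C = [[A, ρ u vᵀ], [ρ v uᵀ, B]] has eigenvalues λ₂, ..., λ_m, μ₂, ..., μ_n, γ₁, γ₂ (with multiplicity), where γ₁, γ₂ are the eigenvalues of the 2×2 matrix [[λ₁, ρ], [ρ, μ₁]]. -/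
open Matrix Polynomial

/-!
For `x` outside the spectra of `A` and `B`, the Schur complement of `x - A` in `x - C` is
`x - B - ρ² (uᵀ (x - A)⁻¹ u) v vᵀ = x - B - ρ² / (x - λ₁) • v vᵀ`, and since `v` is an eigenvector
of `x - B` the matrix determinant lemma gives it determinant
`det (x - B) * (1 - ρ² / ((x - λ₁) (x - μ₁)))`. Hence
`χ_C * (X - λ₁) (X - μ₁) = χ_A * χ_B * ((X - λ₁) (X - μ₁) - ρ²)` as polynomials, the last factor
being the characteristic polynomial of `[[λ₁, ρ], [ρ, μ₁]]`; taking roots and cancelling `λ₁, μ₁`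
gives the spectrum of `C`.
-/

theorem Polynomial.Monic.roots_mul {R : Type*} [CommRing R] [IsDomain R] {p q : R[X]}
    (hp : p.Monic) (hq : q.Monic) : (p * q).roots = p.roots + q.roots :=
  Polynomial.roots_mul (hp.mul hq).ne_zero

theorem Fin.univ_val_map_succ {α : Type*} {k : ℕ} (f : Fin (k + 1) → α) :
    Finset.univ.val.map f = f 0 ::ₘ Finset.univ.val.map (fun i : Fin k => f i.succ) := by
  simp [List.ofFn_succ]

namespace Matrix

variable {K : Type*} [Field K] {m n : Type*} [Fintype m] [Fintype n] [DecidableEq m] [DecidableEq n]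

theorem det_one_add_vecMulVec (u v : m → K) : det (1 + vecMulVec u v) = 1 + v ⬝ᵥ u := by
  rw [vecMulVec_eq Unit, det_one_add_replicateCol_mul_replicateRow]

theorem inv_mulVec_eq_inv_smul {M : Matrix m m K} {u : m → K} {a : K} (hM : IsUnit M.det)
    (hu : M *ᵥ u = a • u) (ha : a ≠ 0) : M⁻¹ *ᵥ u = a⁻¹ • u := by
  have h : a • (M⁻¹ *ᵥ u) = u := calc
    _ = M⁻¹ *ᵥ (M *ᵥ u) := by rw [hu, mulVec_smul]
    _ = u := by rw [mulVec_mulVec, nonsing_inv_mul _ hM, one_mulVec]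
  rwa [eq_inv_smul_iff₀ ha]

theorem det_sub_smul_vecMulVec_self {N : Matrix n n K} {v : n → K} {b : K}
    (hv : N *ᵥ v = b • v) (hb : b ≠ 0) (t : K) :
    (N - t • vecMulVec v v).det = N.det * (1 - t * (v ⬝ᵥ v) / b) := by
  have h : N - t • vecMulVec v v = N * (1 + vecMulVec (-(t / b) • v) v) := by
    rw [Matrix.mul_add, Matrix.mul_one, mul_vecMulVec, mulVec_smul, hv, smul_smul,
      smul_vecMulVec, neg_mul, div_mul_cancel₀ t hb, neg_smul, ← sub_eq_add_neg]
  rw [h, det_mul, det_one_add_vecMulVec, dotProduct_smul, smul_eq_mul]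
  ring

theorem det_fromBlocks_smul_vecMulVec {M : Matrix m m K} {N : Matrix n n K} {u : m → K}
    {v : n → K} {a b : K} (hM : IsUnit M.det) (hu : M *ᵥ u = a • u) (hv : N *ᵥ v = b • v)
    (ha : a ≠ 0) (hb : b ≠ 0) (ρ : K) :
    (fromBlocks M (ρ • vecMulVec u v) (ρ • vecMulVec v u) N).det
      = M.det * N.det * (1 - ρ ^ 2 * (u ⬝ᵥ u) * (v ⬝ᵥ v) / (a * b)) := by
  let := invertibleOfIsUnitDet M hM
  have schur : ρ • vecMulVec v u * ⅟M * ρ • vecMulVec u v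
      = (ρ ^ 2 * (u ⬝ᵥ u) / a) • vecMulVec v v := by
    rw [invOf_eq_nonsing_inv, Matrix.smul_mul, Matrix.smul_mul, Matrix.mul_smul, Matrix.mul_assoc,
      mul_vecMulVec, inv_mulVec_eq_inv_smul hM hu ha, vecMulVec_mul_vecMulVec, dotProduct_smul]
    simp only [vecMulVec_smul, smul_smul, smul_eq_mul]
    congr 1
    field_simp
  rw [det_fromBlocks₁₁, schur, det_sub_smul_vecMulVec_self hv hb]
  field_simp

theorem scalar_sub_mulVec_of_mulVec_eq_smul {M : Matrix m m K} {u : m → K} {a : K}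
    (hu : M *ᵥ u = a • u) (x : K) : (scalar m x - M) *ᵥ u = (x - a) • u := by
  ext i
  simp [sub_mulVec, hu, scalar_apply, sub_mul]

theorem scalar_sub_fromBlocks (A : Matrix m m K) (B : Matrix m n K) (C : Matrix n m K)
    (D : Matrix n n K) (x : K) :
    scalar (m ⊕ n) x - fromBlocks A B C D
      = fromBlocks (scalar m x - A) (-B) (-C) (scalar n x - D) := by
  ext (i | i) (j | j) <;> simp [scalar_apply, diagonal_apply]

theorem charpoly_fromBlocks_smul_vecMulVec_mul [Infinite K] {A : Matrix m m K} {B : Matrix n n K}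
    {u : m → K} {v : n → K} {a b : K} (hu : A *ᵥ u = a • u) (hv : B *ᵥ v = b • v) (ρ : K) :
    (fromBlocks A (ρ • vecMulVec u v) (ρ • vecMulVec v u) B).charpoly * ((X - C a) * (X - C b))
      = A.charpoly * B.charpoly
        * ((X - C a) * (X - C b) - C (ρ ^ 2 * (u ⬝ᵥ u) * (v ⬝ᵥ v))) := by
  set p := A.charpoly * B.charpoly * ((X - C a) * (X - C b))
  have hp : p ≠ 0 := ((A.charpoly_monic.mul B.charpoly_monic).mul
    ((monic_X_sub_C a).mul (monic_X_sub_C b))).ne_zero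
  refine eq_of_infinite_eval_eq _ _ ((finite_setOfPred_isRoot hp).infinite_compl.mono ?_)
  intro x hx
  simp only [Set.mem_compl_iff, Set.mem_ofPred_eq, IsRoot, p, eval_mul, eval_sub, eval_X, eval_C,
    mul_eq_zero, not_or, eval_charpoly] at hx ⊢
  obtain ⟨⟨hA, hB⟩, hxa, hxb⟩ := hx
  rw [scalar_sub_fromBlocks, ← neg_smul, ← neg_smul,
    det_fromBlocks_smul_vecMulVec (Ne.isUnit hA) (scalar_sub_mulVec_of_mulVec_eq_smul hu x)
      (scalar_sub_mulVec_of_mulVec_eq_smul hv x) hxa hxb]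
  field_simp

theorem charpoly_fin_two_of_symm (a b ρ : K) :
    (!![a, ρ; ρ, b] : Matrix (Fin 2) (Fin 2) K).charpoly = (X - C a) * (X - C b) - C (ρ ^ 2) := by
  simp only [charpoly_fin_two, trace_fin_two_of, det_fin_two_of, map_add, map_sub, map_mul,
    map_pow]
  ring

end Matrix

theorem stmt_0_general (m n : ℕ)
    (A : Matrix (Fin (m + 1)) (Fin (m + 1)) ℝ)
    (B : Matrix (Fin (n + 1)) (Fin (n + 1)) ℝ)
    (lam : Fin (m + 1) → ℝ) (mu : Fin (n + 1) → ℝ)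
    (hAspec : A.charpoly.roots = Finset.univ.val.map lam)
    (hBspec : B.charpoly.roots = Finset.univ.val.map mu)
    (u : Fin (m + 1) → ℝ) (v : Fin (n + 1) → ℝ)
    (hu : A.mulVec u = lam 0 • u) (hv : B.mulVec v = mu 0 • v)
    (hu1 : ∑ i, u i ^ 2 = 1) (hv1 : ∑ i, v i ^ 2 = 1)
    (ρ : ℝ) :
    (fromBlocks A (ρ • vecMulVec u v) (ρ • vecMulVec v u) B).charpoly.roots
      = Finset.univ.val.map (fun i : Fin m => lam i.succ)
        + Finset.univ.val.map (fun i : Fin n => mu i.succ)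
        + (!![lam 0, ρ; ρ, mu 0] : Matrix (Fin 2) (Fin 2) ℝ).charpoly.roots := by
  have hu1 : u ⬝ᵥ u = 1 := by simpa [dotProduct, sq] using hu1
  have hv1 : v ⬝ᵥ v = 1 := by simpa [dotProduct, sq] using hv1
  have key := charpoly_fromBlocks_smul_vecMulVec_mul hu hv ρ
  rw [hu1, hv1, mul_one, mul_one, ← charpoly_fin_two_of_symm] at key
  have H := congrArg roots key
  rw [Monic.roots_mul (charpoly_monic _) ((monic_X_sub_C _).mul (monic_X_sub_C _)),
    Monic.roots_mul (monic_X_sub_C _) (monic_X_sub_C _), roots_X_sub_C, roots_X_sub_C,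
    Monic.roots_mul ((charpoly_monic _).mul (charpoly_monic _)) (charpoly_monic _),
    Monic.roots_mul (charpoly_monic _) (charpoly_monic _), hAspec, hBspec,
    Fin.univ_val_map_succ, Fin.univ_val_map_succ] at H
  refine add_right_cancel (H.trans ?_)
  simp only [← Multiset.singleton_add]
  abel

/-- Fiedler's lemma: eigenvalues of the bordered block matrix
`[[A, ρ u vᵀ], [ρ v uᵀ, B]]`. -/
theorem stmt_0 (m n : ℕ)
    (A : Matrix (Fin (m + 1)) (Fin (m + 1)) ℝ) (hA : A.IsSymm)
    (B : Matrix (Fin (n + 1)) (Fin (n + 1)) ℝ) (hB : B.IsSymm)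
    (lam : Fin (m + 1) → ℝ) (mu : Fin (n + 1) → ℝ)
    (hAspec : A.charpoly.roots = Finset.univ.val.map lam)
    (hBspec : B.charpoly.roots = Finset.univ.val.map mu)
    (u : Fin (m + 1) → ℝ) (v : Fin (n + 1) → ℝ)
    (hu : A.mulVec u = lam 0 • u) (hv : B.mulVec v = mu 0 • v)
    (hu1 : ∑ i, u i ^ 2 = 1) (hv1 : ∑ i, v i ^ 2 = 1)
    (ρ : ℝ) :
    (fromBlocks A (ρ • vecMulVec u v) (ρ • vecMulVec v u) B).charpoly.roots
      = Finset.univ.val.map (fun i : Fin m => lam i.succ)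
        + Finset.univ.val.map (fun i : Fin n => mu i.succ)
        + (!![lam 0, ρ; ρ, mu 0] : Matrix (Fin 2) (Fin 2) ℝ).charpoly.roots :=
  stmt_0_general m n A B lam mu hAspec hBspec u v hu hv hu1 hv1 ρ
end

section
/- For j = 1, 2, ..., k, let A_j be an n_j×n_j real symmetric matrix with eigenvalues α_{1j}, α_{2j}, ..., α_{n_j j} (counted with multiplicity), and suppose for each j the eigenvectors u_{1j}, ..., u_{n_j j} of A_j (with A_j u_{ij} = α_{ij} u_{ij}) form an orthonormal system. For p = 1, ..., k−1, let ρ_p be arbitrary real constants. Let C be the block-tridiagonal matrix with diagonal blocks A₁, ..., A_k and off-diagonal blocks ρ_p u_{1p} u_{1,p+1}ᵀ (above the diagonal) and ρ_p u_{1,p+1} u_{1p}ᵀ (below the diagonal), all other blocks zero. Then the multiset of eigenvalues of C equals {α_{ij} : 1 ≤ j ≤ k, 2 ≤ i ≤ n_j} together with the eigenvalues γ₁, ..., γ_k of the k×k symmetric tridiagonal matrix Ĉ with diagonal entries α_{11}, α_{12}, ..., α_{1k} and off-diagonal entries ρ₁, ..., ρ_{k−1}. -/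
open Matrix Polynomial

lemma aux_charpoly_conj {m : Type*} [Fintype m] [DecidableEq m]
    (U M : Matrix m m ℝ) (hU : Uᵀ * U = 1) :
    (U * M * Uᵀ).charpoly = M.charpoly := by
  have hU' : U * Uᵀ = 1 := mul_eq_one_comm.mp hU
  have hmap : (U.map (C : ℝ → ℝ[X])) * (Uᵀ.map C) = 1 := by
    rw [← Matrix.map_mul, hU', Matrix.map_one _ (map_zero C) (map_one C)]
  have hmap' : (Uᵀ.map (C : ℝ → ℝ[X])) * (U.map C) = 1 := mul_eq_one_comm.mp hmap
  have key : charmatrix (U * M * Uᵀ) = U.map C * charmatrix M * Uᵀ.map C := by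
    rw [charmatrix, charmatrix]
    rw [mul_sub, sub_mul]
    congr 1
    · have h1 : (diagonal fun _ : m => (X : ℝ[X])) = (X : ℝ[X]) • (1 : Matrix m m ℝ[X]) := by
        rw [smul_eq_diagonal_mul, mul_one]
      rw [scalar_apply, h1, mul_smul_comm, mul_one, smul_mul_assoc, hmap]
    · rw [RingHom.mapMatrix_apply, RingHom.mapMatrix_apply, Matrix.map_mul, Matrix.map_mul]
  rw [charpoly, charpoly, key, det_mul, det_mul, mul_comm, ← mul_assoc, ← det_mul, hmap',
    det_one, one_mul]

lemma aux_roots_charpoly_diagonal {m : Type*} [Fintype m] [DecidableEq m] (d : m → ℝ) :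
    (Matrix.diagonal d).charpoly.roots = Finset.univ.val.map d := by
  have h1 : (diagonal d).charmatrix = diagonal (fun i => X - C (d i)) := by
    ext i j
    by_cases h : i = j
    · subst h; simp [charmatrix_apply, diagonal_apply]
    · simp [charmatrix_apply_ne _ _ _ h, diagonal_apply_ne _ h]
  have h2 : ∏ i, (X - C (d i)) = ((Finset.univ.val.map d).map fun a => X - C a).prod := by
    rw [Multiset.map_map]; rfl
  rw [charpoly, h1, det_diagonal, h2, roots_multiset_prod_X_sub_C]

def sigmaSuccEquiv {k : ℕ} (n : Fin k → ℕ) :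
    ((j : Fin k) × Fin (n j + 1)) ≃ (Fin k ⊕ (j : Fin k) × Fin (n j)) where
  toFun x := Fin.cases (Sum.inl x.1) (fun i => Sum.inr ⟨x.1, i⟩) x.2
  invFun := Sum.elim (fun j => ⟨j, 0⟩) (fun p => ⟨p.1, p.2.succ⟩)
  left_inv := by rintro ⟨j, i⟩; induction i using Fin.cases <;> simp
  right_inv := by rintro (j | ⟨j, i⟩) <;> simp

/-- Block-tridiagonal generalization of Fiedler's lemma. -/
theorem stmt_1 (k : ℕ) (n : Fin k → ℕ)
    (A : ∀ j, Matrix (Fin (n j + 1)) (Fin (n j + 1)) ℝ)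
    (hA : ∀ j, (A j).IsSymm)
    (α : ∀ j, Fin (n j + 1) → ℝ)
    (u : ∀ j, Fin (n j + 1) → Fin (n j + 1) → ℝ)
    (heig : ∀ j i, (A j).mulVec (u j i) = α j i • u j i)
    (hortho : ∀ j, ∀ i i' : Fin (n j + 1),
      ∑ t, u j i t * u j i' t = if i = i' then 1 else 0)
    (ρ : Fin k → ℝ)
    (C : Matrix ((j : Fin k) × Fin (n j + 1)) ((j : Fin k) × Fin (n j + 1)) ℝ)
    (hC : ∀ x y : (j : Fin k) × Fin (n j + 1), C x y =
      if h : x.1 = y.1 then A x.1 x.2 (Fin.cast (by rw [h]) y.2)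
      else if x.1.val + 1 = y.1.val then ρ x.1 * u x.1 0 x.2 * u y.1 0 y.2
      else if y.1.val + 1 = x.1.val then ρ y.1 * u x.1 0 x.2 * u y.1 0 y.2
      else 0)
    (Chat : Matrix (Fin k) (Fin k) ℝ)
    (hChat : ∀ p q : Fin k, Chat p q =
      if p = q then α p 0
      else if p.val + 1 = q.val then ρ p
      else if q.val + 1 = p.val then ρ q
      else 0) :
    C.charpoly.roots
      = (Finset.univ.val.bind fun j : Fin k =>
          Finset.univ.val.map fun i : Fin (n j) => α j i.succ)
        + Chat.charpoly.roots := by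
  classical
  set U : Matrix ((j : Fin k) × Fin (n j + 1)) ((j : Fin k) × Fin (n j + 1)) ℝ :=
    fun x y => if h : x.1 = y.1 then u x.1 (Fin.cast (by rw [h]) y.2) x.2 else 0 with hU
  set D : Matrix ((j : Fin k) × Fin (n j + 1)) ((j : Fin k) × Fin (n j + 1)) ℝ :=
    fun x y => if h : x.1 = y.1 then
        (if x.2 = Fin.cast (by rw [h]) y.2 then α x.1 x.2 else 0)
      else (if x.2 = 0 then (1:ℝ) else 0) * Chat x.1 y.1 * (if y.2 = 0 then (1:ℝ) else 0)
      with hD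
  have hUa : ∀ (j : Fin k) (t i : Fin (n j + 1)), U ⟨j, t⟩ ⟨j, i⟩ = u j i t := by
    intro j t i
    show dite _ _ _ = _
    rw [dif_pos rfl]
    exact congrArg (fun z => u j z t) (Fin.ext rfl)
  have hUb : ∀ x y : (j : Fin k) × Fin (n j + 1), x.1 ≠ y.1 → U x y = 0 := by
    intro x y h; exact dif_neg h
  have hDa : ∀ (j : Fin k) (t i : Fin (n j + 1)),
      D ⟨j, t⟩ ⟨j, i⟩ = if t = i then α j t else 0 := by
    intro j t i
    show dite _ _ _ = _
    rw [dif_pos rfl]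
    congr 1
  have hDb : ∀ (p q : Fin k) (t : Fin (n p + 1)) (i : Fin (n q + 1)), p ≠ q →
      D ⟨p, t⟩ ⟨q, i⟩ = (if t = 0 then (1:ℝ) else 0) * Chat p q * (if i = 0 then (1:ℝ) else 0) := by
    intro p q t i h
    exact dif_neg h
  have hsig : ∀ f : ((j : Fin k) × Fin (n j + 1)) → ℝ,
      ∑ s, f s = ∑ j, ∑ t : Fin (n j + 1), f ⟨j, t⟩ := by
    intro f; rw [← Finset.univ_sigma_univ, Finset.sum_sigma]
  -- orthogonality
  have hUtU : Uᵀ * U = 1 := by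
    ext x y
    rcases x with ⟨p, i⟩
    rcases y with ⟨q, i'⟩
    rw [mul_apply]
    simp only [transpose_apply]
    rw [hsig fun s => U s ⟨p, i⟩ * U s ⟨q, i'⟩]
    by_cases hpq : p = q
    · subst hpq
      rw [Finset.sum_eq_single p (fun j _ hj => Finset.sum_eq_zero fun t _ => by
        rw [hUb ⟨j, t⟩ ⟨p, i⟩ hj, zero_mul]) (by simp)]
      simp only [hUa]
      rw [hortho]
      rw [one_apply]
      by_cases h : i = i'
      · subst h; simp
      · rw [if_neg h, if_neg (by simp [h])]
    · rw [Finset.sum_eq_zero, one_apply, if_neg (by simp [hpq])]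
      intro j _
      apply Finset.sum_eq_zero
      intro t _
      by_cases hjp : j = p
      · subst hjp
        rw [hUb ⟨j, t⟩ ⟨q, i'⟩ hpq, mul_zero]
      · rw [hUb ⟨j, t⟩ ⟨p, i⟩ hjp, zero_mul]
  have hCU : C * U = U * D := by
    ext x y
    rcases x with ⟨p, i⟩
    rcases y with ⟨q, i'⟩
    rw [mul_apply, mul_apply]
    rw [hsig fun s => C ⟨p, i⟩ s * U s ⟨q, i'⟩, hsig fun s => U ⟨p, i⟩ s * D s ⟨q, i'⟩]
    rw [Finset.sum_eq_single q (fun j _ hj => Finset.sum_eq_zero fun t _ => by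
      rw [hUb ⟨j, t⟩ ⟨q, i'⟩ hj, mul_zero]) (by simp)]
    rw [Finset.sum_eq_single p (fun j _ hj => Finset.sum_eq_zero fun t _ => by
      rw [hUb ⟨p, i⟩ ⟨j, t⟩ (Ne.symm hj), zero_mul]) (by simp)]
    simp only [hUa]
    by_cases hpq : p = q
    · subst hpq
      simp only [hDa]
      have hCA : ∀ t : Fin (n p + 1), C ⟨p, i⟩ ⟨p, t⟩ = A p i t := by
        intro t
        rw [hC]
        show dite _ _ _ = _
        rw [dif_pos rfl]
        exact congrArg (fun z => A p i z) (Fin.ext rfl)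
      simp only [hCA]
      have hmv : ∑ t, A p i t * u p i' t = α p i' * u p i' i := by
        have := congrFun (heig p i') i
        rw [mulVec, dotProduct] at this
        simpa using this
      rw [hmv]
      rw [Finset.sum_eq_single i' (fun t _ ht => by rw [if_neg ht, mul_zero]) (by simp)]
      rw [if_pos rfl]
      ring
    · simp only [hDb p q _ _ hpq]
      have hrhs : ∑ t, u p t i * ((if t = 0 then (1:ℝ) else 0) * Chat p q *
          (if i' = 0 then (1:ℝ) else 0))
          = u p 0 i * Chat p q * (if i' = 0 then (1:ℝ) else 0) := by
        rw [Finset.sum_eq_single 0 (fun t _ ht => by rw [if_neg ht]; ring) (by simp)]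
        rw [if_pos rfl]; ring
      rw [hrhs]
      have hCval : ∀ t : Fin (n q + 1), C ⟨p, i⟩ ⟨q, t⟩ =
          (if p.val + 1 = q.val then ρ p * u p 0 i * u q 0 t
           else if q.val + 1 = p.val then ρ q * u p 0 i * u q 0 t else 0) := by
        intro t
        rw [hC]
        show dite _ _ _ = _
        rw [dif_neg hpq]
      simp only [hCval]
      have hChat' : Chat p q = (if p.val + 1 = q.val then ρ p
          else if q.val + 1 = p.val then ρ q else 0) := by
        rw [hChat, if_neg hpq]
      rw [hChat']
      by_cases h1 : p.val + 1 = q.val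
      · simp only [if_pos h1]
        have : ∑ t, ρ p * u p 0 i * u q 0 t * u q i' t
            = ρ p * u p 0 i * ∑ t, u q 0 t * u q i' t := by
          rw [Finset.mul_sum]; congr 1; ext t; ring
        rw [this, hortho]
        by_cases h0 : i' = 0
        · subst h0; simp; ring
        · rw [if_neg (fun h => h0 h.symm), if_neg h0]; ring
      · simp only [if_neg h1]
        by_cases h2 : q.val + 1 = p.val
        · simp only [if_pos h2]
          have : ∑ t, ρ q * u p 0 i * u q 0 t * u q i' t
              = ρ q * u p 0 i * ∑ t, u q 0 t * u q i' t := by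
            rw [Finset.mul_sum]; congr 1; ext t; ring
          rw [this, hortho]
          by_cases h0 : i' = 0
          · subst h0; simp; ring
          · rw [if_neg (fun h => h0 h.symm), if_neg h0]; ring
        · simp only [if_neg h2]
          simp
  have hcpD : C.charpoly = D.charpoly := by
    have hUUt : U * Uᵀ = 1 := mul_eq_one_comm.mp hUtU
    have hC2 : C = U * D * Uᵀ := by
      calc C = C * (U * Uᵀ) := by rw [hUUt, mul_one]
        _ = (C * U) * Uᵀ := by rw [mul_assoc]
        _ = U * D * Uᵀ := by rw [hCU]
    rw [hC2, aux_charpoly_conj _ _ hUtU]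
  -- reindex D
  have hre : reindex (sigmaSuccEquiv n) (sigmaSuccEquiv n) D
      = fromBlocks Chat 0 0 (diagonal fun p : (j : Fin k) × Fin (n j) => α p.1 p.2.succ) := by
    ext a b
    rw [reindex_apply, submatrix_apply]
    rcases a with p | ⟨p, ip⟩ <;> rcases b with q | ⟨q, iq⟩
    · show D ⟨p, 0⟩ ⟨q, 0⟩ = Chat p q
      by_cases h : p = q
      · subst h
        rw [hDa, if_pos rfl, hChat, if_pos rfl]
      · rw [hDb p q _ _ h, if_pos rfl, if_pos rfl]; ring
    · show D ⟨p, 0⟩ ⟨q, iq.succ⟩ = 0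
      by_cases h : p = q
      · subst h
        rw [hDa, if_neg (Ne.symm (Fin.succ_ne_zero iq))]
      · rw [hDb p q _ _ h, if_neg (Fin.succ_ne_zero iq), mul_zero]
    · show D ⟨p, ip.succ⟩ ⟨q, 0⟩ = 0
      by_cases h : p = q
      · subst h
        rw [hDa, if_neg (Fin.succ_ne_zero ip)]
      · rw [hDb p q _ _ h, if_neg (Fin.succ_ne_zero ip), zero_mul, zero_mul]
    · show D ⟨p, ip.succ⟩ ⟨q, iq.succ⟩
        = diagonal (fun p : (j : Fin k) × Fin (n j) => α p.1 p.2.succ) ⟨p, ip⟩ ⟨q, iq⟩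
      by_cases h : p = q
      · subst h
        rw [hDa]
        by_cases h2 : ip = iq
        · subst h2
          rw [if_pos rfl, diagonal_apply_eq]
        · have e1 : ip.succ ≠ iq.succ := fun hh => h2 (Fin.succ_injective _ hh)
          have e2 : (⟨p, ip⟩ : (j : Fin k) × Fin (n j)) ≠ ⟨p, iq⟩ := by
            intro hh
            exact h2 (eq_of_heq (Sigma.mk.inj_iff.mp hh).2)
          rw [if_neg e1, diagonal_apply_ne _ e2]
      · have e2 : (⟨p, ip⟩ : (j : Fin k) × Fin (n j)) ≠ ⟨q, iq⟩ := fun hh =>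
          h (congrArg Sigma.fst hh)
        rw [hDb p q _ _ h, if_neg (Fin.succ_ne_zero ip), zero_mul, zero_mul,
          diagonal_apply_ne _ e2]
  have hcpD2 : D.charpoly = Chat.charpoly
      * (diagonal fun p : (j : Fin k) × Fin (n j) => α p.1 p.2.succ).charpoly := by
    rw [← Matrix.charpoly_reindex (sigmaSuccEquiv n) D, hre, charpoly_fromBlocks_zero₁₂]
  rw [hcpD, hcpD2, roots_mul (mul_ne_zero (Chat.charpoly_monic.ne_zero)
    ((charpoly_monic _).ne_zero)), aux_roots_charpoly_diagonal, add_comm]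
  congr 1
  rw [← Finset.univ_sigma_univ]
  show Multiset.map (fun p : (j : Fin k) × Fin (n j) => α p.1 p.2.succ)
      (Multiset.sigma Finset.univ.val fun _ => Finset.univ.val)
    = Finset.univ.val.bind fun j : Fin k =>
        Finset.univ.val.map fun i : Fin (n j) => α j i.succ
  rw [Multiset.sigma, Multiset.map_bind]
  apply Multiset.bind_congr
  intro j _
  rw [Multiset.map_map]
  rfl
end

section
/- (Rado) Let A be any n×n complex matrix with eigenvalues λ₁, ..., λ_n (counted with multiplicity). Let X₁, X₂, ..., X_r be r eigenvectors of A corresponding respectively to the eigenvalues λ₁, ..., λ_r, with r ≤ n, and let X = [X₁|X₂|...|X_r] be the n×r matrix whose columns are X₁, ..., X_r. Then for any r×n matrix C, the matrix A + XC has eigenvalues γ₁, ..., γ_r, λ_{r+1}, ..., λ_n (counted with multiplicity), where γ₁, ..., γ_r are the eigenvalues of the r×r matrix Λ + CX, with Λ = diag(λ₁, ..., λ_r). -/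
/-!
If `A X = X Λ`, conjugating the block matrix `[[Λ, C], [0, A + X C]]` by `[[1, 0], [X, 1]]`
gives `[[Λ + C X, C], [0, A]]`, so `χ(A + X C) χ(Λ) = χ(A) χ(Λ + C X)`. Comparing roots and
cancelling `λ₁, …, λ_r`, which are the roots of `χ(Λ)` and also among those of `χ(A)`, gives the
spectrum of `A + X C`.
-/

open Matrix Polynomial

namespace Matrix

variable {R : Type*} [CommRing R] {m n : Type*} [Fintype m] [Fintype n] [DecidableEq m]

theorem mul_eq_mul_diagonal_of_mulVec_col {A : Matrix n n R} {X : Matrix n m R} {d : m → R}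
    (h : ∀ i, A *ᵥ (fun j => X j i) = d i • fun j => X j i) : A * X = X * diagonal d := by
  ext j i
  rw [mul_diagonal]
  simpa [mul_apply, mulVec, dotProduct, mul_comm] using congrFun (h i) j

variable [DecidableEq n]

theorem charpoly_add_mul_mul_charpoly_of_mul_eq_mul {A : Matrix n n R} {L : Matrix m m R}
    {X : Matrix n m R} (C : Matrix m n R) (h : A * X = X * L) :
    (A + X * C).charpoly * L.charpoly = A.charpoly * (L + C * X).charpoly := by
  set U : Matrix (m ⊕ n) (m ⊕ n) R := fromBlocks 1 0 X 1
  set V : Matrix (m ⊕ n) (m ⊕ n) R := fromBlocks 1 0 (-X) 1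
  have hUV : U * V = 1 := by simp [U, V, fromBlocks_multiply, fromBlocks_one]
  have hconj : V * (fromBlocks L C 0 (A + X * C) * U) = fromBlocks (L + C * X) C 0 A := by
    simp only [U, V, fromBlocks_multiply, Matrix.mul_add, Matrix.add_mul, ← Matrix.mul_assoc, h,
      Matrix.one_mul, Matrix.mul_one, Matrix.zero_mul, Matrix.mul_zero, Matrix.neg_mul, zero_add,
      add_zero, neg_add_cancel_comm_assoc]
    congr 1
    abel
  have hchar := congrArg charpoly hconj
  rw [charpoly_mul_comm, Matrix.mul_assoc, hUV, Matrix.mul_one, charpoly_fromBlocks_zero₂₁,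
    charpoly_fromBlocks_zero₂₁] at hchar
  linear_combination hchar

theorem roots_charpoly_diagonal [IsDomain R] (d : n → R) :
    (diagonal d).charpoly.roots = Finset.univ.val.map d := by
  have hroots := roots_multiset_prod_X_sub_C (Finset.univ.val.map d)
  rw [Multiset.map_map, ← Finset.prod_eq_multiset_prod] at hroots
  rw [charpoly_diagonal]
  exact hroots

end Matrix

theorem Fin.univ_val_map_eq_castLE_add_filter {α : Type*} {r n : ℕ} (hr : r ≤ n) (f : Fin n → α) :
    (Finset.univ : Finset (Fin n)).val.map f
      = (Finset.univ : Finset (Fin r)).val.map (fun i => f (Fin.castLE hr i))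
        + (Finset.univ.filter fun i : Fin n => r ≤ i.val).val.map f := by
  have hlow : (Finset.univ.filter fun i : Fin n => ¬ r ≤ i.val).val
      = (Finset.univ : Finset (Fin r)).val.map (Fin.castLE hr) := by
    rw [← Fin.coe_castLEEmb, ← Finset.map_val]
    congr 1
    ext i
    simp only [Finset.mem_filter, Finset.mem_univ, true_and, not_le, Finset.mem_map]
    exact ⟨fun hi => ⟨⟨i, hi⟩, rfl⟩, by rintro ⟨j, -, rfl⟩; exact j.isLt⟩
  rw [← Function.comp_def, ← Multiset.map_map, ← hlow, ← Multiset.map_add,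
    add_comm, Finset.filter_val, Finset.filter_val, Multiset.filter_add_not]

theorem stmt_2_general (n r : ℕ) (hr : r ≤ n)
    (A : Matrix (Fin n) (Fin n) ℂ) (lam : Fin n → ℂ)
    (hspec : A.charpoly.roots = Finset.univ.val.map lam)
    (X : Matrix (Fin n) (Fin r) ℂ)
    (hXeig : ∀ i : Fin r,
      A.mulVec (fun j => X j i) = lam (Fin.castLE hr i) • fun j => X j i)
    (C : Matrix (Fin r) (Fin n) ℂ) :
    (A + X * C).charpoly.roots
      = (Matrix.diagonal (fun i : Fin r => lam (Fin.castLE hr i)) + C * X).charpoly.roots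
        + (Finset.univ.filter fun i : Fin n => r ≤ i.val).val.map lam := by
  have hAX := mul_eq_mul_diagonal_of_mulVec_col hXeig
  have hroots := congrArg roots (charpoly_add_mul_mul_charpoly_of_mul_eq_mul C hAX)
  rw [roots_mul ((charpoly_monic _).mul (charpoly_monic _)).ne_zero,
    roots_mul ((charpoly_monic _).mul (charpoly_monic _)).ne_zero, hspec,
    Fin.univ_val_map_eq_castLE_add_filter hr, roots_charpoly_diagonal] at hroots
  exact add_right_cancel (hroots.trans (by abel))

/-- Rado's theorem: the eigenvalues of `A + X C` are the eigenvalues of `Λ + C X`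
together with `λ_{r+1}, ..., λ_n`. -/
theorem stmt_2 (n r : ℕ) (hr : r ≤ n)
    (A : Matrix (Fin n) (Fin n) ℂ) (lam : Fin n → ℂ)
    (hspec : A.charpoly.roots = Finset.univ.val.map lam)
    (X : Matrix (Fin n) (Fin r) ℂ)
    (hX : ∀ i : Fin r, (fun j => X j i) ≠ 0)
    (hXeig : ∀ i : Fin r,
      A.mulVec (fun j => X j i) = lam (Fin.castLE hr i) • fun j => X j i)
    (C : Matrix (Fin r) (Fin n) ℂ) :
    (A + X * C).charpoly.roots
      = (Matrix.diagonal (fun i : Fin r => lam (Fin.castLE hr i)) + C * X).charpoly.roots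
        + (Finset.univ.filter fun i : Fin n => r ≤ i.val).val.map lam :=
  stmt_2_general n r hr A lam hspec X hXeig C
end

section
/- Let A be an n×n real symmetric matrix with eigenvalues λ₁, ..., λ_n (counted with multiplicity). Let {X₁, X₂, ..., X_r} be an orthonormal set of eigenvectors of A corresponding respectively to the eigenvalues λ₁, ..., λ_r, with r ≤ n, and let X = [X₁|X₂|...|X_r] be the n×r matrix whose columns are X₁, ..., X_r. Then for any r×r real symmetric matrix Y, the symmetric matrix A + X Y Xᵀ has eigenvalues γ₁, ..., γ_r, λ_{r+1}, ..., λ_n (counted with multiplicity), where γ₁, ..., γ_r are the eigenvalues of the matrix Λ + Y, with Λ = diag(λ₁, ..., λ_r). -/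
open Matrix Polynomial

private lemma evalCharpoly {m : Type*} [Fintype m] [DecidableEq m]
    (M : Matrix m m ℝ) (t : ℝ) :
    M.charpoly.eval t = (t • (1 : Matrix m m ℝ) - M).det := by
  rw [Matrix.charpoly, ← Polynomial.coe_evalRingHom, RingHom.map_det]
  congr 1
  ext i j
  by_cases h : i = j
  · subst h; simp [Matrix.one_apply]
  · simp [h, Matrix.one_apply, Matrix.charmatrix_apply_ne _ _ _ h]

/-- Symmetric version of Rado's theorem: the eigenvalues of `A + X Y Xᵀ` are the
eigenvalues of `Λ + Y` together with `λ_{r+1}, ..., λ_n`. -/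
theorem stmt_3 (n r : ℕ) (hr : r ≤ n)
    (A : Matrix (Fin n) (Fin n) ℝ) (hA : A.IsSymm) (lam : Fin n → ℝ)
    (hspec : A.charpoly.roots = Finset.univ.val.map lam)
    (X : Matrix (Fin n) (Fin r) ℝ)
    (hXortho : ∀ i i' : Fin r, ∑ j, X j i * X j i' = if i = i' then 1 else 0)
    (hXeig : ∀ i : Fin r,
      A.mulVec (fun j => X j i) = lam (Fin.castLE hr i) • fun j => X j i)
    (Y : Matrix (Fin r) (Fin r) ℝ) (hY : Y.IsSymm) :
    (A + X * Y * Xᵀ).charpoly.roots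
      = (Matrix.diagonal (fun i : Fin r => lam (Fin.castLE hr i)) + Y).charpoly.roots
        + (Finset.univ.filter fun i : Fin n => r ≤ i.val).val.map lam := by
  classical
  set d : Fin r → ℝ := fun i => lam (Fin.castLE hr i) with hd
  set Λ : Matrix (Fin r) (Fin r) ℝ := Matrix.diagonal d with hΛ
  set M : Matrix (Fin n) (Fin n) ℝ := A + X * Y * Xᵀ with hM
  -- matrix facts
  have hAX : A * X = X * Λ := by
    ext j i
    have h := congrFun (hXeig i) j
    simp only [Matrix.mulVec, dotProduct, Pi.smul_apply, smul_eq_mul] at h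
    rw [hΛ, Matrix.mul_apply, Matrix.mul_diagonal]
    exact h.trans (mul_comm _ _)
  have hXX : Xᵀ * X = 1 := by
    ext i i'
    simpa [Matrix.mul_apply, Matrix.one_apply] using hXortho i i'
  -- the key polynomial identity
  have hkey : M.charpoly * Λ.charpoly = (Λ + Y).charpoly * A.charpoly := by
    apply Polynomial.eq_of_infinite_eval_eq
    have hne : A.charpoly * Λ.charpoly ≠ 0 :=
      ((A.charpoly_monic).mul (Λ.charpoly_monic)).ne_zero
    have hfin : {t : ℝ | (A.charpoly * Λ.charpoly).IsRoot t}.Finite :=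
      Polynomial.finite_setOf_isRoot hne
    have hinf : {t : ℝ | ¬ (A.charpoly * Λ.charpoly).IsRoot t}.Infinite := by
      have := hfin.infinite_compl
      simpa [Set.compl_setOf] using this
    refine hinf.mono ?_
    intro t ht
    simp only [Set.mem_setOf_eq, Polynomial.IsRoot, Polynomial.eval_mul, mul_eq_zero,
      not_or] at ht
    obtain ⟨hAroot, hΛroot⟩ := ht
    set B : Matrix (Fin n) (Fin n) ℝ := t • 1 - A with hB
    set D : Matrix (Fin r) (Fin r) ℝ := t • 1 - Λ with hD
    have hBdet : IsUnit B.det := by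
      rw [isUnit_iff_ne_zero, ← evalCharpoly]; exact hAroot
    have hDdet : IsUnit D.det := by
      rw [isUnit_iff_ne_zero, ← evalCharpoly]; exact hΛroot
    have hBinv : B * B⁻¹ = 1 := Matrix.mul_nonsing_inv B hBdet
    have hBinv' : B⁻¹ * B = 1 := Matrix.nonsing_inv_mul B hBdet
    have hDinv : D * D⁻¹ = 1 := Matrix.mul_nonsing_inv D hDdet
    have hBX : B * X = X * D := by
      rw [hB, hD, Matrix.sub_mul, Matrix.mul_sub, hAX, Matrix.smul_mul, Matrix.mul_smul,
        Matrix.one_mul, Matrix.mul_one]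
    have h1 : B⁻¹ * X * D = X := by
      rw [Matrix.mul_assoc, ← hBX, ← Matrix.mul_assoc, hBinv', Matrix.one_mul]
    have h2 : B⁻¹ * X = X * D⁻¹ := by
      calc B⁻¹ * X = B⁻¹ * X * (D * D⁻¹) := by rw [hDinv, Matrix.mul_one]
        _ = B⁻¹ * X * D * D⁻¹ := by simp only [Matrix.mul_assoc]
        _ = X * D⁻¹ := by rw [h1]
    have h3 : Xᵀ * (B⁻¹ * X) = D⁻¹ := by
      rw [h2, ← Matrix.mul_assoc, hXX, Matrix.one_mul]
    -- determinant computation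
    have hfact : t • (1 : Matrix (Fin n) (Fin n) ℝ) - M
        = B * (1 + B⁻¹ * (X * -Y * Xᵀ)) := by
      rw [Matrix.mul_add, Matrix.mul_one, ← Matrix.mul_assoc, hBinv, Matrix.one_mul,
        hB, hM, Matrix.mul_neg, Matrix.neg_mul]
      abel
    have hdet1 : (t • (1 : Matrix (Fin n) (Fin n) ℝ) - M).det
        = B.det * (1 + Xᵀ * (B⁻¹ * X * -Y)).det := by
      rw [hfact, det_mul]
      congr 1
      rw [← Matrix.det_one_add_mul_comm (B⁻¹ * X * -Y) Xᵀ]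
      congr 1
      simp only [Matrix.mul_assoc]
    have h4 : (1 : Matrix (Fin r) (Fin r) ℝ) + Xᵀ * (B⁻¹ * X * -Y) = 1 - D⁻¹ * Y := by
      have h : Xᵀ * (B⁻¹ * X * -Y) = Xᵀ * (B⁻¹ * X) * -Y := by
        simp only [Matrix.mul_assoc]
      rw [h, h3]
      simp [Matrix.mul_neg, sub_eq_add_neg]
    have h5 : D * (1 - D⁻¹ * Y) = D - Y := by
      rw [Matrix.mul_sub, Matrix.mul_one, ← Matrix.mul_assoc, hDinv, Matrix.one_mul]
    -- assemble
    show (M.charpoly * Λ.charpoly).eval t = ((Λ + Y).charpoly * A.charpoly).eval t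
    have lhs : (M.charpoly * Λ.charpoly).eval t
        = B.det * ((1 - D⁻¹ * Y).det * D.det) := by
      rw [Polynomial.eval_mul, evalCharpoly, evalCharpoly, hdet1, h4, ← hD]
      ring
    have rhs : ((Λ + Y).charpoly * A.charpoly).eval t = B.det * (D - Y).det := by
      rw [Polynomial.eval_mul, evalCharpoly, evalCharpoly, ← hB]
      have h : t • (1 : Matrix (Fin r) (Fin r) ℝ) - (Λ + Y) = D - Y := by
        rw [hD]; abel
      rw [h]; ring
    rw [lhs, rhs, mul_comm (1 - D⁻¹ * Y).det D.det, ← det_mul, h5]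
  -- roots of the identity
  have hMne : M.charpoly ≠ 0 := M.charpoly_monic.ne_zero
  have hΛne : Λ.charpoly ≠ 0 := Λ.charpoly_monic.ne_zero
  have hΛYne : (Λ + Y).charpoly ≠ 0 := (Λ + Y).charpoly_monic.ne_zero
  have hAne : A.charpoly ≠ 0 := A.charpoly_monic.ne_zero
  have hroots : M.charpoly.roots + Λ.charpoly.roots
      = (Λ + Y).charpoly.roots + A.charpoly.roots := by
    rw [← Polynomial.roots_mul (mul_ne_zero hMne hΛne), hkey,
      Polynomial.roots_mul (mul_ne_zero hΛYne hAne)]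
  -- roots of Λ
  have hΛroots : Λ.charpoly.roots = Finset.univ.val.map d := by
    have h1 : Λ.charpoly = ∏ i : Fin r, (Polynomial.X - C (d i)) := by
      rw [Matrix.charpoly_of_upperTriangular Λ (Matrix.blockTriangular_diagonal d)]
      simp [hΛ]
    rw [h1, Finset.prod_eq_multiset_prod]
    have h2 := Polynomial.roots_multiset_prod_X_sub_C (Finset.univ.val.map d)
    rw [Multiset.map_map] at h2
    simpa [Function.comp] using h2
  -- splitting univ over Fin n
  have hsplit : (Finset.univ : Finset (Fin n)).val.map lam
      = Finset.univ.val.map d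
        + (Finset.univ.filter fun i : Fin n => r ≤ i.val).val.map lam := by
    have hpart : (Finset.univ : Finset (Fin n)).val
        = Multiset.filter (fun i : Fin n => i.val < r) Finset.univ.val
          + Multiset.filter (fun i : Fin n => ¬ i.val < r) Finset.univ.val :=
      (Multiset.filter_add_not _ _).symm
    have hcast : Multiset.filter (fun i : Fin n => i.val < r) Finset.univ.val
        = (Finset.univ : Finset (Fin r)).val.map (Fin.castLE hr) := by
      refine (Multiset.Nodup.ext ?_ ?_).mpr ?_
      · exact Multiset.Nodup.filter _ Finset.univ.nodup
      · exact Multiset.Nodup.map (Fin.castLE_injective hr) Finset.univ.nodup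
      · intro a
        simp only [Multiset.mem_filter, Finset.mem_val, Finset.mem_univ, true_and,
          Multiset.mem_map]
        constructor
        · intro h; exact ⟨⟨a.val, h⟩, rfl⟩
        · rintro ⟨j, rfl⟩; simp
    have hfilterle : Multiset.filter (fun i : Fin n => ¬ i.val < r) Finset.univ.val
        = (Finset.univ.filter fun i : Fin n => r ≤ i.val).val := by
      rw [Finset.filter_val]
      congr 1
      ext i
      simp [not_lt]
    conv_lhs => rw [hpart]
    rw [Multiset.map_add, hcast, Multiset.map_map, hfilterle]
    rfl
  -- finish
  have h6 : M.charpoly.roots + Λ.charpoly.roots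
      = ((Λ + Y).charpoly.roots
          + (Finset.univ.filter fun i : Fin n => r ≤ i.val).val.map lam)
        + Λ.charpoly.roots := by
    rw [hroots, hspec, hsplit, hΛroots]
    abel
  exact add_right_cancel h6
end

section
/- For j = 1, 2, ..., k, let A_j be an n_j×n_j real matrix with eigenvalues λ_{1j}, λ_{2j}, ..., λ_{n_j j} counted with multiplicity, and suppose for each j the vector u_j is a unit eigenvector of A_j corresponding to λ_{1j}. Then for any real constants ρ_{pq} (1 ≤ p, q ≤ k), the (n₁+...+n_k)×(n₁+...+n_k) block matrix B whose (p,p) diagonal block is A_p + ρ_{pp} u_p u_pᵀ and whose (p,q) off-diagonal block (p ≠ q) is ρ_{pq} u_p u_qᵀ has eigenvalues λ_{21}, ..., λ_{n₁1}, λ_{22}, ..., λ_{n₂2}, ..., λ_{2k}, ..., λ_{n_k k}, γ₁, γ₂, ..., γ_k (counted with multiplicity), where γ₁, ..., γ_k are the eigenvalues of the k×k matrix B̂ whose (p,p) entry is λ_{1p} + ρ_{pp} and whose (p,q) entry (p ≠ q) is ρ_{pq}. -/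
/-!
Choose orthogonal `Q_j` with first column `u_j` and conjugate `B` by the block-diagonal matrix of
the `Q_j`: each block keeps its spectrum and `u_j` becomes the first basis vector `e_j`, which is
still an eigenvector. Then every row outside the positions of the `e_j` vanishes in their columns,
so `χ_B = χ_{B̂} · g`, where `g` is the characteristic polynomial of the complementary block and
does not involve `ρ`. Taking `ρ = 0` gives `∏_j χ_{A_j} = ∏_j (X - λ_{1j}) · g`, so the roots
of `g` are the `λ_{ij}` with `i ≥ 2`.
-/

open Matrix Polynomial

theorem Polynomial.roots_eq_bind_of_prod_eq_prod_X_sub_C_mul {R ι : Type*} [CommRing R]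
    [IsDomain R] (s : Finset ι) {f : ι → R[X]} {a : ι → R} {t : ι → Multiset R} {g : R[X]}
    (hf0 : ∀ i ∈ s, f i ≠ 0) (hf : ∀ i ∈ s, (f i).roots = a i ::ₘ t i)
    (h : ∏ i ∈ s, f i = (∏ i ∈ s, (X - C (a i))) * g) :
    g.roots = s.val.bind t := by
  have hne : (∏ i ∈ s, (X - C (a i))) * g ≠ 0 := h ▸ Finset.prod_ne_zero_iff.mpr hf0
  have hroots := congrArg roots h
  rw [roots_prod _ _ (Finset.prod_ne_zero_iff.mpr hf0), roots_mul hne,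
    roots_prod _ _ (left_ne_zero_of_mul hne), Multiset.bind_congr hf] at hroots
  simp only [roots_X_sub_C, ← Multiset.singleton_add, Multiset.bind_add] at hroots
  exact (add_left_cancel hroots).symm

namespace Matrix

theorem exists_mem_orthogonalGroup_mulVec_single_eq {m : Type*} [Fintype m] [DecidableEq m]
    (o : m) (u : m → ℝ) (hu : u ⬝ᵥ u = 1) :
    ∃ Q ∈ orthogonalGroup m ℝ, Q *ᵥ Pi.single o 1 = u := by
  have hv : Orthonormal ℝ (({o} : Set m).domRestrict fun _ => WithLp.toLp 2 u) := by
    rw [orthonormal_subsingleton_iff]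
    intro
    rw [EuclideanSpace.norm_eq, Real.sqrt_eq_one]
    simpa [dotProduct, sq] using hu
  obtain ⟨b, hb⟩ := hv.exists_orthonormalBasis_extension_of_card_eq (by simp)
  refine ⟨(EuclideanSpace.basisFun m ℝ).toBasis.toMatrix b,
    (EuclideanSpace.basisFun m ℝ).toMatrix_orthonormalBasis_mem_unitary b, ?_⟩
  ext i
  simp [Module.Basis.toMatrix_apply, hb o rfl]

section TwoBlocks

variable {R n : Type*} [CommRing R] [Fintype n] [DecidableEq n]

theorem charmatrix_toSquareBlockProp (M : Matrix n n R) (p : n → Prop) [DecidablePred p] :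
    (M.toSquareBlockProp p).charmatrix = M.charmatrix.toSquareBlockProp p := by
  ext i j : 1
  simp [charmatrix_apply, toSquareBlockProp_def, diagonal_apply, Subtype.ext_iff]

theorem charpoly_eq_mul_of_twoBlockTriangular (M : Matrix n n R) (p : n → Prop)
    [DecidablePred p] (h : ∀ i, ¬p i → ∀ j, p j → M i j = 0) :
    M.charpoly
      = (M.toSquareBlockProp p).charpoly * (M.toSquareBlockProp fun i => ¬p i).charpoly := by
  simp only [charpoly, charmatrix_toSquareBlockProp]
  refine twoBlockTriangular_det _ p fun i hi j hj => ?_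
  rw [charmatrix_apply_ne _ _ _ (by rintro rfl; exact hi hj), h i hi j hj, map_zero, neg_zero]

end TwoBlocks

section BlockDiagonal

variable {R ι : Type*} [CommRing R] {m : ι → Type*}

/-- Block `(p, q)` is `ρ p q • vecMulVec (v p) (w q)`; the paper's coupling term is
`blockCoupling ρ u u`. -/
def blockCoupling (ρ : Matrix ι ι R) (v w : ∀ j, m j → R) : Matrix (Σ j, m j) (Σ j, m j) R :=
  of fun x y => ρ x.1 y.1 * v x.1 x.2 * w y.1 y.2

@[simp]
theorem blockCoupling_zero (v w : ∀ j, m j → R) : blockCoupling 0 v w = 0 := by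
  ext x y
  simp [blockCoupling]

variable [Fintype ι] [DecidableEq ι] [∀ j, Fintype (m j)]

theorem det_blockDiagonal' [∀ j, DecidableEq (m j)] (d : ∀ j, Matrix (m j) (m j) R) :
    (blockDiagonal' d).det = ∏ j, (d j).det := by
  let _ : LinearOrder ι := LinearOrder.lift' _ (Fintype.equivFin ι).injective
  rw [(blockTriangular_blockDiagonal' d).det]
  refine Finset.prod_subset (Finset.subset_univ _) (fun j _ hj => ?_) |>.trans ?_
  · have : IsEmpty {x : Σ j, m j // x.1 = j} :=
      ⟨fun x => hj (Finset.mem_image.mpr ⟨x, Finset.mem_univ _, x.2⟩)⟩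
    exact det_isEmpty
  · refine Finset.prod_congr rfl fun j _ => ?_
    rw [← det_reindex_self (Equiv.sigmaSubtype j)]
    congr 1
    ext a b
    simp [toSquareBlock_def, Equiv.sigmaSubtype]

theorem charmatrix_blockDiagonal' [∀ j, DecidableEq (m j)] (d : ∀ j, Matrix (m j) (m j) R) :
    (blockDiagonal' d).charmatrix = blockDiagonal' fun j => (d j).charmatrix := by
  ext ⟨i, a⟩ ⟨j, b⟩ : 1
  obtain rfl | hij := eq_or_ne i j
  · simp [charmatrix_apply, diagonal_apply]
  · rw [charmatrix_apply_ne _ _ _ (by simp [hij]), blockDiagonal'_apply_ne _ _ _ hij,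
      blockDiagonal'_apply_ne _ _ _ hij, map_zero, neg_zero]

theorem charpoly_blockDiagonal' [∀ j, DecidableEq (m j)] (d : ∀ j, Matrix (m j) (m j) R) :
    (blockDiagonal' d).charpoly = ∏ j, (d j).charpoly := by
  rw [charpoly, charmatrix_blockDiagonal', det_blockDiagonal']
  rfl

theorem blockDiagonal'_mul_apply (P : ∀ j, Matrix (m j) (m j) R)
    (M : Matrix (Σ j, m j) (Σ j, m j) R) (p : ι) (i : m p) (y : Σ j, m j) :
    (blockDiagonal' P * M) ⟨p, i⟩ y = ∑ a, P p i a * M ⟨p, a⟩ y := by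
  rw [mul_apply, Fintype.sum_sigma, Fintype.sum_eq_single p fun q hq => ?_]
  · simp
  · simp [blockDiagonal'_apply_ne _ _ _ hq.symm]

theorem mul_blockDiagonal'_apply (Q : ∀ j, Matrix (m j) (m j) R)
    (M : Matrix (Σ j, m j) (Σ j, m j) R) (x : Σ j, m j) (q : ι) (l : m q) :
    (M * blockDiagonal' Q) x ⟨q, l⟩ = ∑ b, M x ⟨q, b⟩ * Q q b l := by
  rw [mul_apply, Fintype.sum_sigma, Fintype.sum_eq_single q fun p hp => ?_]
  · simp
  · simp [blockDiagonal'_apply_ne _ _ _ hp]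

theorem blockDiagonal'_mul_blockCoupling_mul_blockDiagonal' (P Q : ∀ j, Matrix (m j) (m j) R)
    (ρ : Matrix ι ι R) (v w : ∀ j, m j → R) :
    blockDiagonal' P * blockCoupling ρ v w * blockDiagonal' Q
      = blockCoupling ρ (fun j => P j *ᵥ v j) (fun j => w j ᵥ* Q j) := by
  ext ⟨p, i⟩ ⟨q, l⟩
  simp only [mul_blockDiagonal'_apply, blockDiagonal'_mul_apply, blockCoupling, of_apply,
    mulVec, vecMul, dotProduct, Finset.sum_mul, Finset.mul_sum]
  refine Finset.sum_congr rfl fun b _ => Finset.sum_congr rfl fun a _ => ?_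
  ring

variable [∀ j, DecidableEq (m j)]

/-- The rows outside the positions `o j` vanish in the columns `o j`, so these positions split
off as a `ι × ι` block. -/
theorem charpoly_blockDiagonal'_add_blockCoupling_single (M : ∀ j, Matrix (m j) (m j) R)
    (o : ∀ j, m j) (lam : ι → R)
    (hM : ∀ j, M j *ᵥ Pi.single (o j) 1 = lam j • Pi.single (o j) 1) (ρ : Matrix ι ι R) :
    (blockDiagonal' M + blockCoupling ρ (fun j => Pi.single (o j) 1)
        (fun j => Pi.single (o j) 1)).charpoly
      = (diagonal lam + ρ).charpoly
        * ((blockDiagonal' M).toSquareBlockProp fun x => ¬x.2 = o x.1).charpoly := by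
  have hcol : ∀ j i, M j i (o j) = if i = o j then lam j else 0 := fun j i => by
    simpa [mulVec_single_one, Pi.single_apply] using congrFun (hM j) i
  set N := blockDiagonal' M + blockCoupling ρ (fun j => Pi.single (o j) 1)
    (fun j => Pi.single (o j) 1)
  have hN : ∀ x, ¬x.2 = o x.1 → ∀ y : Σ j, m j, N x y = blockDiagonal' M x y := by
    rintro ⟨p, i⟩ hi y
    simp [N, blockCoupling, Pi.single_apply, hi]
  have htri : ∀ x, ¬x.2 = o x.1 → ∀ y : Σ j, m j, y.2 = o y.1 → N x y = 0 := by
    rintro ⟨p, i⟩ hi ⟨q, l⟩ (rfl : l = o q)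
    rw [hN _ hi]
    obtain rfl | hpq := eq_or_ne p q
    · simp [hcol, hi]
    · exact blockDiagonal'_apply_ne _ _ _ hpq
  let e : {x : Σ j, m j // x.2 = o x.1} ≃ ι :=
    { toFun := fun x => x.1.1
      invFun := fun j => ⟨⟨j, o j⟩, rfl⟩
      left_inv := by rintro ⟨⟨j, i⟩, rfl : i = o j⟩; rfl
      right_inv := fun _ => rfl }
  rw [charpoly_eq_mul_of_twoBlockTriangular N _ htri, ← charpoly_reindex e]
  congr 2
  · ext p q
    obtain rfl | hpq := eq_or_ne p q
    · simp [N, e, blockCoupling, toSquareBlockProp_def, hcol]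
    · simp [N, e, blockCoupling, toSquareBlockProp_def, hpq, blockDiagonal'_apply_ne _ _ _ hpq]
  · ext x y
    exact hN x x.2 y

theorem exists_monic_charpoly_blockDiagonal'_add_blockCoupling_eq
    (A : ∀ j, Matrix (m j) (m j) ℝ) (lam : ι → ℝ) (u : ∀ j, m j → ℝ)
    (heig : ∀ j, A j *ᵥ u j = lam j • u j) (hu : ∀ j, u j ⬝ᵥ u j = 1) :
    ∃ g : ℝ[X], g.Monic ∧ ∀ ρ : Matrix ι ι ℝ,
      (blockDiagonal' A + blockCoupling ρ u u).charpoly = (diagonal lam + ρ).charpoly * g := by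
  have hne : ∀ j, Nonempty (m j) := fun j => by
    by_contra h
    have := not_nonempty_iff.mp h
    simpa [dotProduct] using hu j
  obtain ⟨o⟩ : Nonempty (∀ j, m j) := inferInstance
  choose Q hQ hQu using fun j => exists_mem_orthogonalGroup_mulVec_single_eq (o j) (u j) (hu j)
  have hQu' : ∀ j, (Q j)ᵀ *ᵥ u j = Pi.single (o j) 1 := fun j => by
    rw [← hQu j, mulVec_mulVec, (mem_orthogonalGroup_iff' _ _).mp (hQ j), one_mulVec]
  refine ⟨_, charpoly_monic ((blockDiagonal' fun j => (Q j)ᵀ * A j * Q j).toSquareBlockProp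
    fun x => ¬x.2 = o x.1), fun ρ => ?_⟩
  rw [← charpoly_blockDiagonal'_add_blockCoupling_single (fun j => (Q j)ᵀ * A j * Q j) o lam
    (fun j => by rw [← mulVec_mulVec, ← mulVec_mulVec, hQu, heig, mulVec_smul, hQu'])]
  have hconj : blockDiagonal' (fun j => (Q j)ᵀ) * (blockDiagonal' A + blockCoupling ρ u u)
      * blockDiagonal' Q = blockDiagonal' (fun j => (Q j)ᵀ * A j * Q j)
        + blockCoupling ρ (fun j => Pi.single (o j) 1) (fun j => Pi.single (o j) 1) := by
    simp only [mul_add, add_mul, blockDiagonal'_mul_blockCoupling_mul_blockDiagonal',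
      ← blockDiagonal'_mul, ← mulVec_transpose, hQu']
  have hQQt : blockDiagonal' Q * blockDiagonal' (fun j => (Q j)ᵀ) = 1 := by
    simp only [← blockDiagonal'_mul, (mem_orthogonalGroup_iff _ _).mp (hQ _)]
    exact blockDiagonal'_one
  rw [← hconj, charpoly_mul_comm, ← Matrix.mul_assoc, hQQt, Matrix.one_mul]

end BlockDiagonal

end Matrix

/-- Main theorem: the eigenvalues of the full block matrix `B` (general real matrices,
rank-one coupling blocks `ρ_{pq} u_p u_qᵀ`) are those of the `k × k` matrix `B̂`
together with the non-Perron eigenvalues of the blocks. -/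
theorem stmt_4 (k : ℕ) (n : Fin k → ℕ)
    (A : ∀ j, Matrix (Fin (n j + 1)) (Fin (n j + 1)) ℝ)
    (lam1 : Fin k → ℝ)
    (μ : ∀ j, Fin (n j) → ℂ)
    (hspec : ∀ j, ((A j).map Complex.ofReal).charpoly.roots
        = (lam1 j : ℂ) ::ₘ Finset.univ.val.map (μ j))
    (u : ∀ j, Fin (n j + 1) → ℝ)
    (heig : ∀ j, (A j).mulVec (u j) = lam1 j • u j)
    (hnorm : ∀ j, ∑ i, u j i ^ 2 = 1)
    (ρ : Fin k → Fin k → ℝ)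
    (B : Matrix ((j : Fin k) × Fin (n j + 1)) ((j : Fin k) × Fin (n j + 1)) ℝ)
    (hB : ∀ x y : (j : Fin k) × Fin (n j + 1), B x y =
      (if h : x.1 = y.1 then A x.1 x.2 (Fin.cast (by rw [h]) y.2) else 0)
        + ρ x.1 y.1 * u x.1 x.2 * u y.1 y.2)
    (Bhat : Matrix (Fin k) (Fin k) ℝ)
    (hBhat : ∀ p q : Fin k, Bhat p q = (if p = q then lam1 p else 0) + ρ p q) :
    (B.map Complex.ofReal).charpoly.roots
      = (Bhat.map Complex.ofReal).charpoly.roots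
        + Finset.univ.val.bind fun j : Fin k => Finset.univ.val.map (μ j) := by
  have hB' : B = blockDiagonal' A + blockCoupling (of ρ) u u := by
    ext ⟨p, i⟩ ⟨q, l⟩
    obtain rfl | hpq := eq_or_ne p q
    · simp [hB, blockCoupling]
    · simp [hB, blockCoupling, hpq, blockDiagonal'_apply_ne _ _ _ hpq]
  have hBhat' : Bhat = diagonal lam1 + of ρ := by
    ext p q
    rw [hBhat, Matrix.add_apply, diagonal_apply, of_apply]
  obtain ⟨g, hg, hfac⟩ := exists_monic_charpoly_blockDiagonal'_add_blockCoupling_eq A lam1 u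
    heig fun j => by simpa [dotProduct, sq] using hnorm j
  have hcharpoly_map : ∀ {m : Type} [Fintype m] [DecidableEq m] (M : Matrix m m ℝ),
      (M.map Complex.ofReal).charpoly = M.charpoly.map Complex.ofRealHom :=
    fun M => charpoly_map M Complex.ofRealHom
  have hg_roots : (g.map Complex.ofRealHom).roots
      = Finset.univ.val.bind fun j => Finset.univ.val.map (μ j) := by
    refine roots_eq_bind_of_prod_eq_prod_X_sub_C_mul Finset.univ
      (fun j _ => (charpoly_monic _).ne_zero) (fun j _ => hspec j) ?_
    simpa [charpoly_blockDiagonal', charpoly_diagonal, Polynomial.map_prod, hcharpoly_map]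
      using congrArg (Polynomial.map Complex.ofRealHom) (hfac 0)
  rw [hcharpoly_map, hB', hfac (of ρ), Polynomial.map_mul,
    roots_mul (((charpoly_monic _).map _).mul (hg.map _)).ne_zero, ← hcharpoly_map, hBhat',
    hg_roots]
end

section
/- Let A be an m×m real symmetric matrix with eigenvalues λ₁, λ₂, ..., λ_m (counted with multiplicity) and let u be a unit eigenvector of A corresponding to λ₁. Let B be an n×n real symmetric matrix with eigenvalues μ₁, μ₂, ..., μ_n (counted with multiplicity) and let v be a unit eigenvector of B corresponding to μ₁. Then for any reals ρ, ρ₁₁, ρ₂₂, the (m+n)×(m+n) block matrix C = [[A + ρ₁₁ u uᵀ, ρ u vᵀ], [ρ v uᵀ, B + ρ₂₂ v vᵀ]] has eigenvalues λ₂, ..., λ_m, μ₂, ..., μ_n, γ₁, γ₂ (with multiplicity), where γ₁, γ₂ are the eigenvalues of the 2×2 matrix [[λ₁ + ρ₁₁, ρ], [ρ, μ₁ + ρ₂₂]]. -/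
/-!
Choose orthogonal matrices `P`, `Q` whose first columns are `u`, `v`. Conjugating by
`diag(P, Q)` turns the rank-one terms into multiples of matrix units at the two first positions,
and the eigenvector equations make the first columns of `Pᵀ A P` and `Qᵀ B Q` equal to `λ₁ e₀`
and `μ₁ e₀`. Moving both first indices to the front, the conjugated matrix becomes block upper
triangular with diagonal blocks the `2 × 2` matrix, `(Pᵀ A P)` and `(Qᵀ B Q)` with their first
row and column removed; the characteristic polynomials of the last two are those of `A` and `B`
divided by `X - λ₁` and `X - μ₁`.
-/

open Matrix Polynomial

theorem exists_orthogonal_mulVec_single_eq {ι : Type*} [Fintype ι] [DecidableEq ι]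
    (i₀ : ι) (u : ι → ℝ) (hu : ∑ i, u i ^ 2 = 1) :
    ∃ P : Matrix ι ι ℝ, Pᵀ * P = 1 ∧ P *ᵥ Pi.single i₀ 1 = u := by
  have hunit : ‖WithLp.toLp 2 u‖ = 1 := by simp [EuclideanSpace.norm_eq, hu]
  have horth : Orthonormal ℝ (({i₀} : Set ι).domRestrict fun _ => WithLp.toLp 2 u) := by
    rw [orthonormal_iff_ite]
    rintro ⟨i, rfl⟩ ⟨j, rfl⟩
    simp [hunit]
  obtain ⟨b, hb⟩ := horth.exists_orthonormalBasis_extension_of_card_eq (by simp)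
  refine ⟨(EuclideanSpace.basisFun ι ℝ).toBasis.toMatrix b.toBasis, ?_, ?_⟩
  · simpa using (EuclideanSpace.basisFun ι ℝ).toMatrix_orthonormalBasis_conjTranspose_mul_self b
  · ext i
    simp [Module.Basis.toMatrix_apply, hb i₀ rfl]

theorem transpose_mulVec_of_orthogonal {R ι : Type*} [CommRing R] [Fintype ι] [DecidableEq ι]
    {P : Matrix ι ι R} (hP : Pᵀ * P = 1) {x u : ι → R} (hPx : P *ᵥ x = u) : Pᵀ *ᵥ u = x := by
  rw [← hPx, mulVec_mulVec, hP, one_mulVec]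

theorem charpoly_transpose_mul_mul_of_orthogonal {R ι : Type*} [CommRing R] [Fintype ι]
    [DecidableEq ι] {P : Matrix ι ι R} (hP : Pᵀ * P = 1) (M : Matrix ι ι R) :
    (Pᵀ * M * P).charpoly = M.charpoly := by
  rw [charpoly_mul_comm, ← Matrix.mul_assoc, mul_eq_one_comm.mp hP, Matrix.one_mul]

theorem exists_orthogonal_transpose_mul_mul_col_zero {k : ℕ}
    {A : Matrix (Fin (k + 1)) (Fin (k + 1)) ℝ} {u : Fin (k + 1) → ℝ} {c : ℝ}
    (hu : A *ᵥ u = c • u) (hu1 : ∑ i, u i ^ 2 = 1) :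
    ∃ P : Matrix (Fin (k + 1)) (Fin (k + 1)) ℝ, Pᵀ * P = 1 ∧ Pᵀ *ᵥ u = Pi.single 0 1 ∧
      (Pᵀ * A * P) 0 0 = c ∧ ∀ i : Fin k, (Pᵀ * A * P) i.succ 0 = 0 := by
  obtain ⟨P, hP, hPu⟩ := exists_orthogonal_mulVec_single_eq 0 u hu1
  have hPu' := transpose_mulVec_of_orthogonal hP hPu
  have hcol : (Pᵀ * A * P).col 0 = c • Pi.single 0 1 := by
    rw [← mulVec_single_one, ← mulVec_mulVec, hPu, ← mulVec_mulVec, hu, mulVec_smul, hPu']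
  exact ⟨P, hP, hPu', by simpa using congrFun hcol 0, fun i => by simpa using congrFun hcol i.succ⟩

theorem charpoly_eq_X_sub_C_mul_charpoly_submatrix_succ {R : Type*} [CommRing R] {k : ℕ}
    (M : Matrix (Fin (k + 1)) (Fin (k + 1)) R) (hM : ∀ i : Fin k, M i.succ 0 = 0) :
    M.charpoly = (X - C (M 0 0)) * (M.submatrix Fin.succ Fin.succ).charpoly := by
  rw [charpoly, det_succ_column_zero, Fin.sum_univ_succ, Finset.sum_eq_zero]
  · simp only [Fin.succAbove_zero, charmatrix_apply_eq, Fin.val_zero, pow_zero, one_mul,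
      add_zero]
    congr 2
    ext i j
    simp [charmatrix_apply, diagonal_apply]
  · intro i _
    simp [hM, Fin.succ_ne_zero]

theorem roots_eq_map_succ_of_eq_X_sub_C_mul {R : Type*} [CommRing R] [IsDomain R] {k : ℕ}
    {p q : R[X]} (f : Fin (k + 1) → R) (hq : q ≠ 0) (hpq : p = (X - C (f 0)) * q)
    (hp : p.roots = Finset.univ.val.map f) :
    q.roots = Finset.univ.val.map fun i : Fin k => f i.succ := by
  rw [hpq, roots_mul (mul_ne_zero (X_sub_C_ne_zero _) hq), roots_X_sub_C, Multiset.singleton_add,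
    Fin.univ_val_map, List.ofFn_succ, ← Multiset.cons_coe, ← Fin.univ_val_map] at hp
  exact Multiset.cons_inj_right _ |>.mp hp

theorem transpose_mul_vecMulVec_mul {R ι κ : Type*} [CommRing R] [Fintype ι] [Fintype κ]
    (P : Matrix ι ι R) (Q : Matrix κ κ R) (u : ι → R) (w : κ → R) :
    Pᵀ * vecMulVec u w * Q = vecMulVec (Pᵀ *ᵥ u) (Qᵀ *ᵥ w) := by
  rw [mul_vecMulVec, vecMulVec_mul, mulVec_transpose, mulVec_transpose]

theorem transpose_fromBlocks_mul_fromBlocks_add_vecMulVec_mul {R ι κ : Type*} [CommRing R]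
    [Fintype ι] [Fintype κ] [DecidableEq ι] [DecidableEq κ] {P A : Matrix ι ι R}
    {Q B : Matrix κ κ R} {u : ι → R} {v : κ → R} {i₀ : ι} {j₀ : κ}
    (hPu : Pᵀ *ᵥ u = Pi.single i₀ 1) (hQv : Qᵀ *ᵥ v = Pi.single j₀ 1) (a b c d : R) :
    (fromBlocks P 0 0 Q)ᵀ * fromBlocks (A + a • vecMulVec u u) (b • vecMulVec u v)
        (c • vecMulVec v u) (B + d • vecMulVec v v) * fromBlocks P 0 0 Q
      = fromBlocks (Pᵀ * A * P + single i₀ i₀ a) (single i₀ j₀ b) (single j₀ i₀ c)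
          (Qᵀ * B * Q + single j₀ j₀ d) := by
  simp only [fromBlocks_transpose, fromBlocks_multiply, transpose_zero, Matrix.zero_mul,
    Matrix.mul_zero, add_zero, zero_add, Matrix.mul_add, Matrix.add_mul, Matrix.mul_smul,
    Matrix.smul_mul, transpose_mul_vecMulVec_mul, hPu, hQv, ← single_eq_single_vecMulVec_single,
    smul_single, smul_eq_mul, mul_one, smul_zero]

theorem charpoly_eq_mul_of_toBlocks₂₁_eq_zero {R ι κ : Type*} [CommRing R] [Fintype ι]
    [Fintype κ] [DecidableEq ι] [DecidableEq κ] (M : Matrix (ι ⊕ κ) (ι ⊕ κ) R)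
    (hM : M.toBlocks₂₁ = 0) :
    M.charpoly = M.toBlocks₁₁.charpoly * M.toBlocks₂₂.charpoly := by
  conv_lhs => rw [← fromBlocks_toBlocks M, hM]
  exact charpoly_fromBlocks_zero₂₁ _ _ _

def finSuccSumFinSuccEquiv (m n : ℕ) :
    Fin (m + 1) ⊕ Fin (n + 1) ≃ Fin 2 ⊕ (Fin m ⊕ Fin n) where
  toFun := Sum.elim (Fin.cases (.inl 0) (.inr ∘ .inl)) (Fin.cases (.inl 1) (.inr ∘ .inr))
  invFun := Sum.elim ![.inl 0, .inr 0] (Sum.elim (.inl ∘ Fin.succ) (.inr ∘ Fin.succ))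
  left_inv := by rintro (i | i) <;> cases i using Fin.cases <;> simp
  right_inv := by rintro ((t : Fin 2) | i | i) <;> [fin_cases t; skip; skip] <;> simp

theorem charpoly_fromBlocks_add_single {R : Type*} [CommRing R] {m n : ℕ}
    (M₁ : Matrix (Fin (m + 1)) (Fin (m + 1)) R) (M₂ : Matrix (Fin (n + 1)) (Fin (n + 1)) R)
    (h₁ : ∀ i : Fin m, M₁ i.succ 0 = 0) (h₂ : ∀ j : Fin n, M₂ j.succ 0 = 0) (a b c d : R) :
    (fromBlocks (M₁ + single 0 0 a) (single 0 0 b) (single 0 0 c) (M₂ + single 0 0 d)).charpoly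
      = !![M₁ 0 0 + a, b; c, M₂ 0 0 + d].charpoly *
          ((M₁.submatrix Fin.succ Fin.succ).charpoly *
            (M₂.submatrix Fin.succ Fin.succ).charpoly) := by
  set e := finSuccSumFinSuccEquiv m n
  set N := reindex e e
    (fromBlocks (M₁ + single 0 0 a) (single 0 0 b) (single 0 0 c) (M₂ + single 0 0 d))
  have hN₂₁ : N.toBlocks₂₁ = 0 := by
    ext i (j : Fin 2)
    rcases i with i | i <;> fin_cases j <;>
      simp [N, e, finSuccSumFinSuccEquiv, toBlocks₂₁, h₁, h₂, (Fin.succ_ne_zero _).symm]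
  have hN₂₂₂₁ : N.toBlocks₂₂.toBlocks₂₁ = 0 := by
    ext i j
    simp [N, e, finSuccSumFinSuccEquiv, toBlocks₂₁, toBlocks₂₂, (Fin.succ_ne_zero _).symm]
  have hN₁₁ : N.toBlocks₁₁ = !![M₁ 0 0 + a, b; c, M₂ 0 0 + d] := by
    ext i j
    fin_cases i <;> fin_cases j <;> simp [N, e, finSuccSumFinSuccEquiv, toBlocks₁₁]
  have hN₂₂₁₁ : N.toBlocks₂₂.toBlocks₁₁ = M₁.submatrix Fin.succ Fin.succ := by
    ext i j
    simp [N, e, finSuccSumFinSuccEquiv, toBlocks₁₁, toBlocks₂₂, (Fin.succ_ne_zero _).symm]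
  have hN₂₂₂₂ : N.toBlocks₂₂.toBlocks₂₂ = M₂.submatrix Fin.succ Fin.succ := by
    ext i j
    simp [N, e, finSuccSumFinSuccEquiv, toBlocks₂₂, (Fin.succ_ne_zero _).symm]
  rw [← charpoly_reindex e, charpoly_eq_mul_of_toBlocks₂₁_eq_zero _ hN₂₁,
    charpoly_eq_mul_of_toBlocks₂₁_eq_zero _ hN₂₂₂₁, hN₁₁, hN₂₂₁₁, hN₂₂₂₂]

theorem stmt_6_general (m n : ℕ)
    (A : Matrix (Fin (m + 1)) (Fin (m + 1)) ℝ)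
    (B : Matrix (Fin (n + 1)) (Fin (n + 1)) ℝ)
    (lam : Fin (m + 1) → ℝ) (mu : Fin (n + 1) → ℝ)
    (hAspec : A.charpoly.roots = Finset.univ.val.map lam)
    (hBspec : B.charpoly.roots = Finset.univ.val.map mu)
    (u : Fin (m + 1) → ℝ) (v : Fin (n + 1) → ℝ)
    (hu : A.mulVec u = lam 0 • u) (hv : B.mulVec v = mu 0 • v)
    (hu1 : ∑ i, u i ^ 2 = 1) (hv1 : ∑ i, v i ^ 2 = 1)
    (ρ ρ₁₁ ρ₂₂ : ℝ) :
    (fromBlocks (A + ρ₁₁ • vecMulVec u u) (ρ • vecMulVec u v)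
        (ρ • vecMulVec v u) (B + ρ₂₂ • vecMulVec v v)).charpoly.roots
      = Finset.univ.val.map (fun i : Fin m => lam i.succ)
        + Finset.univ.val.map (fun i : Fin n => mu i.succ)
        + (!![lam 0 + ρ₁₁, ρ; ρ, mu 0 + ρ₂₂] : Matrix (Fin 2) (Fin 2) ℝ).charpoly.roots := by
  obtain ⟨P, hP, hPu, hA00, hAcol⟩ := exists_orthogonal_transpose_mul_mul_col_zero hu hu1
  obtain ⟨Q, hQ, hQv, hB00, hBcol⟩ := exists_orthogonal_transpose_mul_mul_col_zero hv hv1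
  have hPQ : (fromBlocks P 0 0 Q)ᵀ * fromBlocks P 0 0 Q = 1 := by
    simp [fromBlocks_transpose, fromBlocks_multiply, hP, hQ]
  have hA : A.charpoly =
      (X - C (lam 0)) * ((Pᵀ * A * P).submatrix Fin.succ Fin.succ).charpoly := by
    rw [← charpoly_transpose_mul_mul_of_orthogonal hP A,
      charpoly_eq_X_sub_C_mul_charpoly_submatrix_succ _ hAcol, hA00]
  have hB : B.charpoly =
      (X - C (mu 0)) * ((Qᵀ * B * Q).submatrix Fin.succ Fin.succ).charpoly := by
    rw [← charpoly_transpose_mul_mul_of_orthogonal hQ B,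
      charpoly_eq_X_sub_C_mul_charpoly_submatrix_succ _ hBcol, hB00]
  rw [← charpoly_transpose_mul_mul_of_orthogonal hPQ,
    transpose_fromBlocks_mul_fromBlocks_add_vecMulVec_mul hPu hQv,
    charpoly_fromBlocks_add_single _ _ hAcol hBcol, hA00, hB00,
    roots_mul ((charpoly_monic _).mul ((charpoly_monic _).mul (charpoly_monic _))).ne_zero,
    roots_mul ((charpoly_monic _).mul (charpoly_monic _)).ne_zero,
    roots_eq_map_succ_of_eq_X_sub_C_mul lam (charpoly_monic _).ne_zero hA hAspec,
    roots_eq_map_succ_of_eq_X_sub_C_mul mu (charpoly_monic _).ne_zero hB hBspec, add_comm]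

/-- Generalized Fiedler lemma with diagonal perturbations `ρ₁₁ u uᵀ`, `ρ₂₂ v vᵀ`. -/
theorem stmt_6 (m n : ℕ)
    (A : Matrix (Fin (m + 1)) (Fin (m + 1)) ℝ) (hA : A.IsSymm)
    (B : Matrix (Fin (n + 1)) (Fin (n + 1)) ℝ) (hB : B.IsSymm)
    (lam : Fin (m + 1) → ℝ) (mu : Fin (n + 1) → ℝ)
    (hAspec : A.charpoly.roots = Finset.univ.val.map lam)
    (hBspec : B.charpoly.roots = Finset.univ.val.map mu)
    (u : Fin (m + 1) → ℝ) (v : Fin (n + 1) → ℝ)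
    (hu : A.mulVec u = lam 0 • u) (hv : B.mulVec v = mu 0 • v)
    (hu1 : ∑ i, u i ^ 2 = 1) (hv1 : ∑ i, v i ^ 2 = 1)
    (ρ ρ₁₁ ρ₂₂ : ℝ) :
    (fromBlocks (A + ρ₁₁ • vecMulVec u u) (ρ • vecMulVec u v)
        (ρ • vecMulVec v u) (B + ρ₂₂ • vecMulVec v v)).charpoly.roots
      = Finset.univ.val.map (fun i : Fin m => lam i.succ)
        + Finset.univ.val.map (fun i : Fin n => mu i.succ)
        + (!![lam 0 + ρ₁₁, ρ; ρ, mu 0 + ρ₂₂] : Matrix (Fin 2) (Fin 2) ℝ).charpoly.roots :=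
  stmt_6_general m n A B lam mu hAspec hBspec u v hu hv hu1 hv1 ρ ρ₁₁ ρ₂₂
end

section
/- Let T₁ be an m×m doubly stochastic matrix with eigenvalues 1, λ₂, ..., λ_m, and let T₂ be an n×n doubly stochastic matrix with eigenvalues 1, μ₂, ..., μ_n, with n ≥ m. Then for any nonnegative reals α and ρ not both zero, the (m+n)×(m+n) matrix D = (1/(α + ρn/√(mn))) · [[α T₁, ρ e_m e_nᵀ], [ρ e_n e_mᵀ, (α + ρ(n−m)/√(mn)) T₂]] is doubly stochastic, and its eigenvalues (counted with multiplicity) are 1, (α√(mn) − ρm)/(α√(mn) + ρn), (α/(α + ρn/√(mn)))λ₂, ..., (α/(α + ρn/√(mn)))λ_m, ((α√(mn) + ρ(n−m))/(α√(mn) + ρn))μ₂, ..., ((α√(mn) + ρ(n−m))/(α√(mn) + ρn))μ_n. -/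
/-!
Write `u = e_m`, `v = e_n` and `D = [[a T₁, r u vᵀ], [r v uᵀ, b T₂]]`; the row sums of `D` are
`a + r √(n/m) = 1 = b + r √(m/n)`, and `u`, `v` are left eigenvectors of `T₁`, `T₂` for the
eigenvalue `1`. Clearing the off-diagonal blocks with these eigenvector relations gives
`χ_D(x) (x - a) (x - b) = ((x - a) (x - b) - r²) χ_{a T₁}(x) χ_{b T₂}(x)`. The row sums force
`(1 - a) (1 - b) = r²`, so the quadratic factor is `(x - 1) (x - (a + b - 1))`, and cancelling the
eigenvalues `a`, `b` of `a T₁`, `b T₂` against `(x - a) (x - b)` leaves the stated spectrum.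
-/

open Matrix Polynomial

/-- A square real matrix is doubly stochastic if it is nonnegative and each row
and column sums to `1`. -/
def IsDoublyStochastic {ι : Type*} [Fintype ι] (T : Matrix ι ι ℝ) : Prop :=
  (∀ i j, 0 ≤ T i j) ∧ (∀ i, ∑ j, T i j = 1) ∧ (∀ j, ∑ i, T i j = 1)

section

variable {R ι : Type*} [CommRing R] [Fintype ι] [DecidableEq ι]

lemma Matrix.det_one_add_vecMulVec_s11 (u v : ι → R) : det (1 + vecMulVec u v) = 1 + v ⬝ᵥ u := by
  rw [vecMulVec_eq Unit, det_one_add_replicateCol_mul_replicateRow]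

lemma Matrix.vecMul_scalar_sub_smul {S : Matrix ι ι R} {u : ι → R} (hu : u ᵥ* S = u) (x a : R) :
    u ᵥ* (scalar ι x - a • S) = (x - a) • u := by
  rw [vecMul_sub, vecMul_smul, hu, scalar_apply, ← smul_one_eq_diagonal, vecMul_smul, vecMul_one,
    sub_smul]

end

section

variable {K ι : Type*} [Field K] [Fintype ι] [DecidableEq ι]

lemma Matrix.charpoly_smul_eq_scaleRoots [Infinite K] (A : Matrix ι ι K) {c : K} (hc : c ≠ 0) :
    (c • A).charpoly = A.charpoly.scaleRoots c := by
  refine Polynomial.funext fun y => ?_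
  obtain ⟨x, rfl⟩ : ∃ x, c * x = y := ⟨y / c, mul_div_cancel₀ y hc⟩
  rw [scaleRoots_eval_mul, eval_charpoly, eval_charpoly, charpoly_natDegree_eq_dim, ← det_smul,
    smul_sub, scalar_apply, scalar_apply, ← diagonal_smul]
  rfl

lemma Matrix.roots_charpoly_smul [IsAlgClosed K] (A : Matrix ι ι K) (c : K) :
    (c • A).charpoly.roots = A.charpoly.roots.map (c * ·) := by
  rcases eq_or_ne c 0 with rfl | hc
  · simp [charpoly_zero, ← (IsAlgClosed.splits A.charpoly).natDegree_eq_card_roots,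
      Multiset.nsmul_singleton]
  · rw [charpoly_smul_eq_scaleRoots A hc, roots_scaleRoots _ hc.isUnit]

end

section

variable {K ι₁ ι₂ : Type*} [Field K] [Fintype ι₁] [Fintype ι₂] [DecidableEq ι₁] [DecidableEq ι₂]

/- Left multiplication by a unipotent block matrix clears the lower-left block, and the resulting
rank-one perturbation of `A₂` factors as `(1 - (r² / (p q)) v vᵀ) A₂`. -/
lemma Matrix.det_fromBlocks_smul_vecMulVec_s11 (A₁ : Matrix ι₁ ι₁ K) (A₂ : Matrix ι₂ ι₂ K)
    {u : ι₁ → K} {v : ι₂ → K} {p q : K} (r : K) (hp : p ≠ 0) (hq : q ≠ 0)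
    (hu : u ᵥ* A₁ = p • u) (hv : v ᵥ* A₂ = q • v) (huu : u ⬝ᵥ u = 1) (hvv : v ⬝ᵥ v = 1) :
    (fromBlocks A₁ (r • vecMulVec u v) (r • vecMulVec v u) A₂).det =
      (1 - r ^ 2 / (p * q)) * A₁.det * A₂.det := by
  have hL : fromBlocks 1 0 (-(r / p) • vecMulVec v u) 1 *
        fromBlocks A₁ (r • vecMulVec u v) (r • vecMulVec v u) A₂ =
      fromBlocks A₁ (r • vecMulVec u v) 0 ((1 + vecMulVec (-(r ^ 2 / (p * q)) • v) v) * A₂) := by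
    rw [fromBlocks_multiply]
    congr 1 <;> simp only [Matrix.one_mul, Matrix.zero_mul, add_zero, Matrix.smul_mul,
      vecMulVec_mul, hu, hv, Matrix.add_mul, vecMul_smul, vecMul_vecMulVec, huu, vecMulVec_smul,
      smul_vecMulVec, smul_smul]
    all_goals match_scalars <;> field_simp <;> ring
  have hdet := congrArg det hL
  rw [det_mul, det_fromBlocks_zero₁₂, det_fromBlocks_zero₂₁, det_mul, det_one_add_vecMulVec_s11,
    det_one, det_one, one_mul, dotProduct_smul, hvv, smul_eq_mul, mul_one] at hdet
  linear_combination hdet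

lemma Matrix.charpoly_fromBlocks_smul_vecMulVec_mul_s11 [Infinite K] {S₁ : Matrix ι₁ ι₁ K}
    {S₂ : Matrix ι₂ ι₂ K} {u : ι₁ → K} {v : ι₂ → K} (hu : u ᵥ* S₁ = u) (hv : v ᵥ* S₂ = v)
    (huu : u ⬝ᵥ u = 1) (hvv : v ⬝ᵥ v = 1) (a b r : K) :
    (fromBlocks (a • S₁) (r • vecMulVec u v) (r • vecMulVec v u) (b • S₂)).charpoly *
        ((X - C a) * (X - C b)) =
      ((X - C a) * (X - C b) - C (r ^ 2)) * (a • S₁).charpoly * (b • S₂).charpoly := by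
  refine eq_of_infinite_eval_eq _ _ ((Set.toFinite {a, b}).infinite_compl.mono fun x hx => ?_)
  simp only [Set.mem_compl_iff, Set.mem_insert_iff, Set.mem_singleton_iff, not_or] at hx
  have hxa : x - a ≠ 0 := sub_ne_zero.mpr hx.1
  have hxb : x - b ≠ 0 := sub_ne_zero.mpr hx.2
  have hblocks : scalar (ι₁ ⊕ ι₂) x -
        fromBlocks (a • S₁) (r • vecMulVec u v) (r • vecMulVec v u) (b • S₂) =
      fromBlocks (scalar ι₁ x - a • S₁) ((-r) • vecMulVec u v) ((-r) • vecMulVec v u)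
        (scalar ι₂ x - b • S₂) := by
    ext (i | i) (j | j) <;> simp [diagonal_apply]
  simp only [Set.mem_ofPred_eq, eval_mul, eval_sub, eval_X, eval_C, eval_charpoly, hblocks]
  rw [det_fromBlocks_smul_vecMulVec_s11 _ _ _ hxa hxb
    (vecMul_scalar_sub_smul hu x a) (vecMul_scalar_sub_smul hv x b) huu hvv]
  field_simp

theorem Matrix.roots_charpoly_fromBlocks_smul_vecMulVec [IsAlgClosed K] {S₁ : Matrix ι₁ ι₁ K}
    {S₂ : Matrix ι₂ ι₂ K} {u : ι₁ → K} {v : ι₂ → K} (hu : u ᵥ* S₁ = u) (hv : v ᵥ* S₂ = v)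
    (huu : u ⬝ᵥ u = 1) (hvv : v ⬝ᵥ v = 1) {L₁ L₂ : Multiset K}
    (h₁ : S₁.charpoly.roots = 1 ::ₘ L₁) (h₂ : S₂.charpoly.roots = 1 ::ₘ L₂) {a b r : K}
    (hab : (1 - a) * (1 - b) = r ^ 2) :
    (fromBlocks (a • S₁) (r • vecMulVec u v) (r • vecMulVec v u) (b • S₂)).charpoly.roots =
      1 ::ₘ (a + b - 1) ::ₘ (L₁.map (a * ·) + L₂.map (b * ·)) := by
  have hquad : (X - C a) * (X - C b) - C (r ^ 2) = (X - C 1) * (X - C (a + b - 1)) := by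
    have h := congrArg C hab
    simp only [map_add, map_sub, map_mul, map_pow, map_one] at h ⊢
    linear_combination h
  have hroots := congrArg roots (charpoly_fromBlocks_smul_vecMulVec_mul_s11 hu hv huu hvv a b r)
  rw [hquad, roots_mul, roots_mul, roots_mul, roots_mul, roots_mul, roots_X_sub_C, roots_X_sub_C,
    roots_X_sub_C, roots_X_sub_C, roots_charpoly_smul, roots_charpoly_smul, h₁, h₂] at hroots
  · refine add_right_cancel (b := {a} + {b}) (hroots.trans ?_)
    rw [Multiset.map_cons, Multiset.map_cons, mul_one, mul_one]
    simp only [← Multiset.singleton_add]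
    abel
  all_goals simp only [ne_eq, mul_eq_zero, X_sub_C_ne_zero, (charpoly_monic _).ne_zero, or_self,
    not_false_eq_true]

end

namespace IsDoublyStochastic

variable {ι ι₁ ι₂ : Type*} [Fintype ι] [Fintype ι₁] [Fintype ι₂]

lemma const_vecMul_map_ofReal {T : Matrix ι ι ℝ} (h : IsDoublyStochastic T) (x : ℂ) :
    (fun _ => x) ᵥ* T.map Complex.ofReal = fun _ => x := by
  funext j
  simp [vecMul, dotProduct, ← Finset.mul_sum, ← Complex.ofReal_sum, h.2.2 j]

variable {T₁ : Matrix ι₁ ι₁ ℝ} {T₂ : Matrix ι₂ ι₂ ℝ} {a b r p q : ℝ}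

theorem fromBlocks_smul_vecMulVec (h₁ : IsDoublyStochastic T₁) (h₂ : IsDoublyStochastic T₂)
    (ha : 0 ≤ a) (hb : 0 ≤ b) (hr : 0 ≤ r) (hp : 0 ≤ p) (hq : 0 ≤ q)
    (hrow₁ : a + Fintype.card ι₂ * r * p * q = 1) (hrow₂ : b + Fintype.card ι₁ * r * p * q = 1) :
    IsDoublyStochastic (fromBlocks (a • T₁) (r • vecMulVec (fun _ => p) (fun _ => q))
      (r • vecMulVec (fun _ => q) (fun _ => p)) (b • T₂)) := by
  refine ⟨?_, ?_, ?_⟩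
  · rintro (i | i) (j | j) <;> simp only [fromBlocks_apply₁₁, fromBlocks_apply₁₂,
      fromBlocks_apply₂₁, fromBlocks_apply₂₂, Matrix.smul_apply, vecMulVec_apply, smul_eq_mul]
    · exact mul_nonneg ha (h₁.1 i j)
    · positivity
    · positivity
    · exact mul_nonneg hb (h₂.1 i j)
  · rintro (i | i)
    · simp [Fintype.sum_sum_type, vecMulVec_apply, ← Finset.mul_sum, h₁.2.1 i]; linarith
    · simp [Fintype.sum_sum_type, vecMulVec_apply, ← Finset.mul_sum, h₂.2.1 i]; linarith
  · rintro (j | j)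
    · simp [Fintype.sum_sum_type, vecMulVec_apply, ← Finset.mul_sum, h₁.2.2 j]; linarith
    · simp [Fintype.sum_sum_type, vecMulVec_apply, ← Finset.mul_sum, h₂.2.2 j]; linarith

theorem roots_charpoly_map_fromBlocks_smul_vecMulVec [DecidableEq ι₁] [DecidableEq ι₂]
    (h₁ : IsDoublyStochastic T₁) (h₂ : IsDoublyStochastic T₂) {L₁ L₂ : Multiset ℂ}
    (hspec₁ : (T₁.map Complex.ofReal).charpoly.roots = 1 ::ₘ L₁)
    (hspec₂ : (T₂.map Complex.ofReal).charpoly.roots = 1 ::ₘ L₂)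
    (hp : Fintype.card ι₁ * p ^ 2 = 1) (hq : Fintype.card ι₂ * q ^ 2 = 1)
    (hrow₁ : a + Fintype.card ι₂ * r * p * q = 1) (hrow₂ : b + Fintype.card ι₁ * r * p * q = 1) :
    ((fromBlocks (a • T₁) (r • vecMulVec (fun _ => p) (fun _ => q))
        (r • vecMulVec (fun _ => q) (fun _ => p)) (b • T₂)).map Complex.ofReal).charpoly.roots =
      1 ::ₘ ((a + b - 1 : ℝ) : ℂ) ::ₘ (L₁.map ((a : ℂ) * ·) + L₂.map ((b : ℂ) * ·)) := by
  have hmap : (fromBlocks (a • T₁) (r • vecMulVec (fun _ => p) (fun _ => q))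
        (r • vecMulVec (fun _ => q) (fun _ => p)) (b • T₂)).map Complex.ofReal =
      fromBlocks ((a : ℂ) • T₁.map Complex.ofReal)
        ((r : ℂ) • vecMulVec (fun _ => (p : ℂ)) (fun _ => (q : ℂ)))
        ((r : ℂ) • vecMulVec (fun _ => (q : ℂ)) (fun _ => (p : ℂ)))
        ((b : ℂ) • T₂.map Complex.ofReal) := by
    ext (i | i) (j | j) <;> simp [vecMulVec_apply]
  have huu : (fun _ : ι₁ => (p : ℂ)) ⬝ᵥ (fun _ => (p : ℂ)) = 1 := by
    simp [dotProduct, ← sq]; exact_mod_cast hp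
  have hvv : (fun _ : ι₂ => (q : ℂ)) ⬝ᵥ (fun _ => (q : ℂ)) = 1 := by
    simp [dotProduct, ← sq]; exact_mod_cast hq
  have hab : (1 - a) * (1 - b) = r ^ 2 := by
    linear_combination (b - 1) * hrow₁ - Fintype.card ι₂ * r * p * q * hrow₂ +
      r ^ 2 * Fintype.card ι₂ * q ^ 2 * hp + r ^ 2 * hq
  rw [hmap, roots_charpoly_fromBlocks_smul_vecMulVec (h₁.const_vecMul_map_ofReal _)
    (h₂.const_vecMul_map_ofReal _) huu hvv hspec₁ hspec₂ (by exact_mod_cast hab)]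
  push_cast
  rfl

end IsDoublyStochastic

theorem stmt_11 (m n : ℕ) (hmn : m ≤ n)
    (T₁ : Matrix (Fin (m + 1)) (Fin (m + 1)) ℝ) (h₁ : IsDoublyStochastic T₁)
    (T₂ : Matrix (Fin (n + 1)) (Fin (n + 1)) ℝ) (h₂ : IsDoublyStochastic T₂)
    (lam : Fin m → ℂ) (mu : Fin n → ℂ)
    (hspec₁ : (T₁.map Complex.ofReal).charpoly.roots = 1 ::ₘ Finset.univ.val.map lam)
    (hspec₂ : (T₂.map Complex.ofReal).charpoly.roots = 1 ::ₘ Finset.univ.val.map mu)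
    (α ρ : ℝ) (hα : 0 ≤ α) (hρ : 0 ≤ ρ) (hne : ¬(α = 0 ∧ ρ = 0))
    (D : Matrix (Fin (m + 1) ⊕ Fin (n + 1)) (Fin (m + 1) ⊕ Fin (n + 1)) ℝ)
    (hD : D = (α + ρ * (n + 1) / Real.sqrt ((m + 1) * (n + 1)))⁻¹ •
      fromBlocks (α • T₁)
        (ρ • vecMulVec (fun _ : Fin (m + 1) => 1 / Real.sqrt (m + 1))
          (fun _ : Fin (n + 1) => 1 / Real.sqrt (n + 1)))
        (ρ • vecMulVec (fun _ : Fin (n + 1) => 1 / Real.sqrt (n + 1))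
          (fun _ : Fin (m + 1) => 1 / Real.sqrt (m + 1)))
        ((α + ρ * ((n + 1 : ℝ) - (m + 1)) / Real.sqrt ((m + 1) * (n + 1))) • T₂)) :
    IsDoublyStochastic D ∧
    (D.map Complex.ofReal).charpoly.roots
      = 1 ::ₘ (((α * Real.sqrt ((m + 1) * (n + 1)) - ρ * (m + 1)) /
            (α * Real.sqrt ((m + 1) * (n + 1)) + ρ * (n + 1)) : ℝ) : ℂ) ::ₘ
        ((Finset.univ.val.map fun i : Fin m =>
            ((α / (α + ρ * (n + 1) / Real.sqrt ((m + 1) * (n + 1))) : ℝ) : ℂ) * lam i)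
          + (Finset.univ.val.map fun i : Fin n =>
            (((α * Real.sqrt ((m + 1) * (n + 1)) + ρ * ((n + 1 : ℝ) - (m + 1))) /
              (α * Real.sqrt ((m + 1) * (n + 1)) + ρ * (n + 1)) : ℝ) : ℂ) * mu i)) := by
  have hcardM : (Fintype.card (Fin (m + 1)) : ℝ) = m + 1 := by simp
  have hcardN : (Fintype.card (Fin (n + 1)) : ℝ) = n + 1 := by simp
  have hMN : (m + 1 : ℝ) ≤ n + 1 := by gcongr
  rw [← hcardM, ← hcardN] at hD hMN ⊢
  set M := (Fintype.card (Fin (m + 1)) : ℝ)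
  set N := (Fintype.card (Fin (n + 1)) : ℝ)
  have hM : 0 < M := by positivity
  have hN : 0 < N := by positivity
  set s := Real.sqrt (M * N)
  have hs : 0 < s := by positivity
  set p := 1 / Real.sqrt M
  set q := 1 / Real.sqrt N
  have hpq : p * q = 1 / s := by rw [one_div_mul_one_div, ← Real.sqrt_mul hM.le]
  have hp : M * p ^ 2 = 1 := by simp only [p, div_pow, Real.sq_sqrt hM.le]; field_simp
  have hq : N * q ^ 2 = 1 := by simp only [q, div_pow, Real.sq_sqrt hN.le]; field_simp
  set c := α + ρ * N / s
  have hc : 0 < c := by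
    rcases hα.eq_or_lt with rfl | _
    · have : 0 < ρ := hρ.lt_of_ne fun h => hne ⟨rfl, h.symm⟩
      positivity
    · positivity
  set β := α + ρ * (N - M) / s
  have hβ : 0 ≤ β := by
    have : 0 ≤ N - M := sub_nonneg.mpr hMN
    positivity
  have hcs : c * s = α * s + ρ * N := by simp only [c]; field_simp
  have hβs : β * s = α * s + ρ * (N - M) := by simp only [β]; field_simp
  clear_value c β
  have hrow₁ : α / c + N * (ρ / c) * p * q = 1 := by
    rw [mul_assoc, hpq]; field_simp; linarith
  have hrow₂ : β / c + M * (ρ / c) * p * q = 1 := by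
    rw [mul_assoc, hpq]; field_simp; linarith
  have hblocks : D = fromBlocks ((α / c) • T₁) ((ρ / c) • vecMulVec (fun _ => p) (fun _ => q))
      ((ρ / c) • vecMulVec (fun _ => q) (fun _ => p)) ((β / c) • T₂) := by
    simp only [hD, fromBlocks_smul, smul_smul, inv_mul_eq_div]
  have hb : β / c = (α * s + ρ * (N - M)) / (α * s + ρ * N) := by
    rw [← hcs, ← hβs, mul_div_mul_right _ _ hs.ne']
  have ht : α / c + β / c - 1 = (α * s - ρ * M) / (α * s + ρ * N) := by
    rw [← hcs]; field_simp; linarith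
  refine ⟨hblocks ▸ h₁.fromBlocks_smul_vecMulVec h₂ (by positivity) (by positivity)
    (by positivity) (by positivity) (by positivity) hrow₁ hrow₂, ?_⟩
  rw [hblocks, h₁.roots_charpoly_map_fromBlocks_smul_vecMulVec h₂ hspec₁ hspec₂ hp hq hrow₁ hrow₂,
    ht, hb, Multiset.map_map, Multiset.map_map]
  rfl
end

section
/- Let K_{n₁,n₂,...,n_k} be the complete k-partite graph with parts of sizes n₁, n₂, ..., n_k, and let X be the k×k symmetric matrix whose diagonal entries are all zero and whose (i,j) entry for i ≠ j is √(n_i n_j). Then the spectrum of K_{n₁,n₂,...,n_k} equals the spectrum of X together with the eigenvalue 0 with multiplicity n₁+...+n_k − k, and hence E(K_{n₁,n₂,...,n_k}) = E(X). -/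
open Matrix Polynomial SimpleGraph

/-- The energy of a real square matrix: the sum of the absolute values of its
eigenvalues (roots of the characteristic polynomial), with multiplicity. -/
noncomputable def energy {ι : Type*} [Fintype ι] [DecidableEq ι]
    (M : Matrix ι ι ℝ) : ℝ :=
  (M.charpoly.roots.map fun x => |x|).sum

/-!
Let `N` be the vertex–part incidence matrix of `K_{n₁,…,n_k}` and `O` the adjacency matrix of
`K_k`. Then `A = N O Nᵀ` and `Nᵀ N = diag(nᵢ)`, so `charpoly(N O · Nᵀ)` and
`charpoly(Nᵀ · N O) = charpoly(diag(nᵢ) O)` differ only by a power of the indeterminate.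
With `D = diag(√nᵢ)` the matrix of the statement is `D O D`, whose characteristic polynomial is
that of `D² O = diag(nᵢ) O`. So the two spectra differ only by zeros, which add no energy.
-/

namespace Matrix

variable {ι W R : Type*} [DecidableEq ι] [CommRing R]

lemma submatrix_eq_one_submatrix_mul_mul_transpose [Fintype ι] (M : Matrix ι ι R) (f : W → ι) :
    M.submatrix f f =
      (1 : Matrix ι ι R).submatrix f id * M * ((1 : Matrix ι ι R).submatrix f id)ᵀ := by
  ext v w
  simp [mul_apply, one_apply]

lemma transpose_one_submatrix_mul_one_submatrix [Fintype W] (f : W → ι) :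
    ((1 : Matrix ι ι R).submatrix f id)ᵀ * (1 : Matrix ι ι R).submatrix f id =
      diagonal fun i => (Fintype.card {w // f w = i} : R) := by
  ext i j
  rw [mul_apply, diagonal_apply]
  split_ifs with h
  · simp [h, one_apply, Fintype.card_subtype, ← ite_and]
  · refine Finset.sum_eq_zero fun w _ => ?_
    simp only [transpose_apply, submatrix_apply, id, one_apply]
    split_ifs <;> simp_all

theorem charpoly_submatrix [Fintype ι] [Fintype W] [DecidableEq W]
    (M : Matrix ι ι R) (f : W → ι) :
    X ^ Fintype.card ι * (M.submatrix f f).charpoly =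
      X ^ Fintype.card W *
        (diagonal (fun i => (Fintype.card {w // f w = i} : R)) * M).charpoly := by
  rw [submatrix_eq_one_submatrix_mul_mul_transpose, charpoly_mul_comm', ← Matrix.mul_assoc,
    transpose_one_submatrix_mul_one_submatrix]

lemma charpoly_diagonal_mul_mul_diagonal [Fintype ι] (s : ι → R) (M : Matrix ι ι R) :
    (diagonal s * M * diagonal s).charpoly = (diagonal (s * s) * M).charpoly := by
  rw [charpoly_mul_comm, ← Matrix.mul_assoc, diagonal_mul_diagonal]
  rfl

end Matrix

lemma Polynomial.roots_mul_X_pow {R : Type*} [CommRing R] [IsDomain R] {p : R[X]}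
    (hp : p ≠ 0) (m : ℕ) : (p * X ^ m).roots = p.roots + Multiset.replicate m 0 := by
  rw [roots_mul (mul_ne_zero hp (pow_ne_zero _ X_ne_zero)), roots_X_pow,
    Multiset.nsmul_singleton]

lemma energy_eq_of_charpoly_eq_mul_X_pow {ι κ : Type*} [Fintype ι] [DecidableEq ι]
    [Fintype κ] [DecidableEq κ] {A : Matrix ι ι ℝ} {B : Matrix κ κ ℝ} {m : ℕ}
    (h : A.charpoly = B.charpoly * X ^ m) : energy A = energy B := by
  simp [energy, h, roots_mul_X_pow B.charpoly_monic.ne_zero]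

namespace SimpleGraph

lemma adjMatrix_comap {V W R : Type*} [Zero R] [One R] (G : SimpleGraph V) (f : W → V)
    [DecidableRel G.Adj] [DecidableRel (G.comap f).Adj] :
    (G.comap f).adjMatrix R = (G.adjMatrix R).submatrix f f := by
  ext v w
  simp

theorem charpoly_adjMatrix_completeMultipartiteGraph {ι R : Type*} [Fintype ι] [DecidableEq ι]
    [CommRing R] (V : ι → Type*) [∀ i, Fintype (V i)] [∀ i, DecidableEq (V i)]
    [DecidableRel (completeMultipartiteGraph V).Adj] :
    X ^ Fintype.card ι * ((completeMultipartiteGraph V).adjMatrix R).charpoly =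
      X ^ Fintype.card (Σ i, V i) *
        (diagonal (fun i => (Fintype.card (V i) : R)) *
          (⊤ : SimpleGraph ι).adjMatrix R).charpoly := by
  rw [adjMatrix_comap, charpoly_submatrix]
  simp only [Fintype.card_congr (Equiv.sigmaSubtype _)]

end SimpleGraph

/-- Spectrum and energy of the complete multipartite graph `K_{n₁,…,n_k}`. -/
theorem stmt_14 (k : ℕ) (n : Fin k → ℕ)
    [inst : DecidableRel (completeMultipartiteGraph fun j : Fin k => Fin (n j + 1)).Adj]
    (X : Matrix (Fin k) (Fin k) ℝ)
    (hX : ∀ p q : Fin k, X p q =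
      if p = q then 0 else Real.sqrt ((n p + 1) * (n q + 1))) :
    ((completeMultipartiteGraph fun j : Fin k => Fin (n j + 1)).adjMatrix ℝ).charpoly.roots
      = X.charpoly.roots + Multiset.replicate (∑ j, n j) 0
    ∧ energy ((completeMultipartiteGraph fun j : Fin k => Fin (n j + 1)).adjMatrix ℝ)
      = energy X := by
  set s : Fin k → ℝ := fun j => Real.sqrt (n j + 1)
  have hX_eq : X = diagonal s * (⊤ : SimpleGraph (Fin k)).adjMatrix ℝ * diagonal s := by
    ext p q
    rw [mul_diagonal, diagonal_mul, hX, adjMatrix_top]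
    split_ifs with h <;> simp [s, h, Real.sqrt_mul' _ (by positivity : (0 : ℝ) ≤ n q + 1)]
  have hs : s * s = fun j => (Fintype.card (Fin (n j + 1)) : ℝ) := by
    ext j
    simp [s, Real.mul_self_sqrt (by positivity : (0 : ℝ) ≤ n j + 1)]
  have hchar : ((completeMultipartiteGraph fun j : Fin k => Fin (n j + 1)).adjMatrix ℝ).charpoly
      = X.charpoly * Polynomial.X ^ (∑ j, n j) := by
    refine mul_left_cancel₀ (pow_ne_zero (Fintype.card (Fin k)) Polynomial.X_ne_zero) ?_
    rw [charpoly_adjMatrix_completeMultipartiteGraph, hX_eq, charpoly_diagonal_mul_mul_diagonal,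
      hs, Fintype.card_sigma]
    simp only [Fintype.card_fin, Finset.sum_add_distrib, Finset.sum_const, Finset.card_univ,
      smul_eq_mul, mul_one, pow_add]
    ring
  exact ⟨by rw [hchar, roots_mul_X_pow X.charpoly_monic.ne_zero],
    energy_eq_of_charpoly_eq_mul_X_pow hchar⟩
end

section
/- Let G₁ be a d-regular simple graph on n vertices with spectrum (d; λ₂, ..., λ_n), and let G₂, ..., G_k be k−1 graphs each isomorphic to G₁. Let G̃ be the graph obtained from G₁, G₂, ..., G_k by connecting each vertex of G_j to every vertex of G_{j+1}, for j = 1, ..., k−1. Then the energy of G̃ is E(G̃) = Σ_{j=1}^{k} |d + 2n cos(jπ/(k+1))| + Σ_{j=2}^{n} k|λ_j|. -/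
set_option linter.unusedSectionVars false
open Matrix Polynomial

section Aux

variable {α β : Type*} [Fintype α] [DecidableEq α] [Fintype β] [DecidableEq β]

lemma my_charmatrix_conj (M W W' : Matrix β β ℝ) (h : W * W' = 1) :
    charmatrix (W * M * W') =
      (C : ℝ →+* ℝ[X]).mapMatrix W * charmatrix M * (C : ℝ →+* ℝ[X]).mapMatrix W' := by
  unfold charmatrix
  rw [mul_sub, sub_mul]
  congr 1
  · have hc : (C : ℝ →+* ℝ[X]).mapMatrix W * Matrix.scalar β (X : ℝ[X]) =
        Matrix.scalar β (X : ℝ[X]) * (C : ℝ →+* ℝ[X]).mapMatrix W :=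
      ((Matrix.scalar_commute (X : ℝ[X]) (fun r' => Commute.all _ _) _)).symm
    rw [hc, mul_assoc, ← _root_.map_mul, h, _root_.map_one, mul_one]
  · rw [← _root_.map_mul, ← _root_.map_mul]

lemma my_charpoly_conj (M W W' : Matrix β β ℝ) (h : W * W' = 1) (h' : W' * W = 1) :
    (W * M * W').charpoly = M.charpoly := by
  unfold Matrix.charpoly
  have hdet : ((C : ℝ →+* ℝ[X]).mapMatrix W).det * ((C : ℝ →+* ℝ[X]).mapMatrix W').det = 1 := by
    rw [← Matrix.det_mul, ← _root_.map_mul, h, _root_.map_one, Matrix.det_one]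
  rw [my_charmatrix_conj M W W' h, Matrix.det_mul, Matrix.det_mul, mul_right_comm, hdet, one_mul]

lemma my_eval_charpoly (M : Matrix β β ℝ) (t : ℝ) :
    M.charpoly.eval t = (t • (1 : Matrix β β ℝ) - M).det := by
  unfold Matrix.charpoly
  rw [← Polynomial.coe_evalRingHom, RingHom.map_det]
  congr 1
  ext i j
  rcases eq_or_ne i j with rfl | hij
  · simp [charmatrix_apply_eq, Matrix.one_apply]
  · simp [charmatrix_apply_ne _ _ _ hij, Matrix.one_apply_ne hij]

lemma my_isRoot_charpoly (M : Matrix β β ℝ) (t : ℝ) (v : β → ℝ) (hv : v ≠ 0)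
    (h : M.mulVec v = t • v) : M.charpoly.IsRoot t := by
  have : (t • (1 : Matrix β β ℝ) - M).det = 0 := by
    rw [← Matrix.exists_mulVec_eq_zero_iff]
    refine ⟨v, hv, ?_⟩
    rw [Matrix.sub_mulVec, Matrix.smul_mulVec, Matrix.one_mulVec, h, sub_self]
  rw [Polynomial.IsRoot, my_eval_charpoly, this]

lemma my_roots_eq (p : ℝ[X]) (hm : p.Monic) (μ : α → ℝ) (hinj : Function.Injective μ)
    (hdeg : p.natDegree = Fintype.card α) (hr : ∀ i, p.IsRoot (μ i)) :
    p.roots = Finset.univ.val.map μ := by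
  have hp0 : p ≠ 0 := hm.ne_zero
  have hnodup : (Finset.univ.val.map μ).Nodup :=
    Multiset.Nodup.map hinj Finset.univ.nodup
  have hle : Finset.univ.val.map μ ≤ p.roots := by
    rw [Multiset.le_iff_subset hnodup]
    intro a ha
    rcases Multiset.mem_map.mp ha with ⟨i, _, rfl⟩
    exact Polynomial.mem_roots'.mpr ⟨hp0, hr i⟩
  refine (Multiset.eq_of_le_of_card_le hle ?_).symm
  have h1 : Multiset.card p.roots ≤ p.natDegree := Polynomial.card_roots' p
  have h2 : Multiset.card (Finset.univ.val.map μ) = Fintype.card α := by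
    rw [Multiset.card_map]; rfl
  omega

/-- block diagonal matrix with block index first -/
def bd (f : α → Matrix β β ℝ) : Matrix (α × β) (α × β) ℝ :=
  Matrix.of fun x y => if x.1 = y.1 then f x.1 x.2 y.2 else 0

lemma bd_apply (f : α → Matrix β β ℝ) (x y : α × β) :
    bd f x y = if x.1 = y.1 then f x.1 x.2 y.2 else 0 := rfl

lemma bd_eq_submatrix (f : α → Matrix β β ℝ) :
    bd f = (Matrix.blockDiagonal f).submatrix (Equiv.prodComm α β) (Equiv.prodComm α β) := by
  ext ⟨p, i⟩ ⟨q, j⟩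
  simp only [bd_apply, Matrix.submatrix_apply, Equiv.prodComm_apply, Prod.swap_prod_mk,
    Matrix.blockDiagonal_apply]

lemma bd_mul (f g : α → Matrix β β ℝ) : bd f * bd g = bd (fun p => f p * g p) := by
  rw [bd_eq_submatrix, bd_eq_submatrix, bd_eq_submatrix, Matrix.submatrix_mul_equiv,
    Matrix.blockDiagonal_mul]

lemma bd_one : bd (fun _ : α => (1 : Matrix β β ℝ)) = 1 := by
  ext ⟨p, i⟩ ⟨q, j⟩
  rw [bd_apply, Matrix.one_apply]
  by_cases hpq : p = q <;> by_cases hij : i = j <;>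
    simp [Matrix.one_apply, Prod.ext_iff, hpq, hij]

lemma my_charmatrix_blockDiagonal (f : α → Matrix β β ℝ) :
    charmatrix (Matrix.blockDiagonal f) = Matrix.blockDiagonal (fun p => charmatrix (f p)) := by
  ext ⟨i, p⟩ ⟨j, q⟩
  rw [charmatrix_apply, Matrix.blockDiagonal_apply, Matrix.blockDiagonal_apply]
  by_cases hpq : p = q
  · subst hpq
    by_cases hij : i = j
    · subst hij; simp [charmatrix_apply]
    · simp only [if_pos rfl, charmatrix_apply]
      simp [Matrix.diagonal_apply, Prod.ext_iff, hij]
  · simp [Matrix.diagonal_apply, Prod.ext_iff, hpq]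

lemma charpoly_bd (f : α → Matrix β β ℝ) :
    (bd f).charpoly = ∏ p : α, (f p).charpoly := by
  rw [bd_eq_submatrix]
  have : (Matrix.blockDiagonal f).submatrix (Equiv.prodComm α β) (Equiv.prodComm α β)
      = Matrix.reindex (Equiv.prodComm α β).symm (Equiv.prodComm α β).symm
        (Matrix.blockDiagonal f) := by
    rw [Matrix.reindex_apply]; simp
  rw [this, Matrix.charpoly_reindex]
  unfold Matrix.charpoly
  rw [my_charmatrix_blockDiagonal, Matrix.det_blockDiagonal]

end Aux
section SMat

open Matrix Polynomial Finset

variable (n : ℕ)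

def Smat : Matrix (Fin (n+1)) (Fin (n+1)) ℝ :=
  Matrix.of fun i j => if j = 0 then 1 else (if i = j then (1:ℝ) else 0) - (if i = 0 then 1 else 0)

noncomputable def SmatInv : Matrix (Fin (n+1)) (Fin (n+1)) ℝ :=
  Matrix.of fun i j => if i = 0 then ((n:ℝ)+1)⁻¹ else (if i = j then (1:ℝ) else 0) - ((n:ℝ)+1)⁻¹

lemma nne : ((n:ℝ)+1) ≠ 0 := by positivity

lemma S_colsum (j : Fin (n+1)) : ∑ i, Smat n i j = if j = 0 then ((n:ℝ)+1) else 0 := by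
  by_cases hj : j = 0
  · subst hj
    have h1 : ∀ i, Smat n i 0 = 1 := fun i => by simp [Smat]
    rw [if_pos rfl, Finset.sum_congr rfl (fun i _ => h1 i), Finset.sum_const,
      Finset.card_univ, Fintype.card_fin, nsmul_eq_mul]
    push_cast; ring
  · rw [if_neg hj]
    have : ∀ i, Smat n i j = (if i = j then (1:ℝ) else 0) - (if i = 0 then 1 else 0) := by
      intro i; simp [Smat, hj]
    rw [Finset.sum_congr rfl (fun i _ => this i), Finset.sum_sub_distrib]
    simp

lemma Sinv_rowsum (i : Fin (n+1)) : ∑ j, SmatInv n i j = if i = 0 then 1 else 0 := by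
  by_cases hi : i = 0
  · subst hi
    have h1 : ∀ j, SmatInv n 0 j = ((n:ℝ)+1)⁻¹ := fun j => by simp [SmatInv]
    rw [if_pos rfl, Finset.sum_congr rfl (fun j _ => h1 j), Finset.sum_const,
      Finset.card_univ, Fintype.card_fin, nsmul_eq_mul]
    push_cast
    rw [mul_inv_cancel₀ (nne n)]
  · rw [if_neg hi]
    have : ∀ j, SmatInv n i j = (if i = j then (1:ℝ) else 0) - ((n:ℝ)+1)⁻¹ := by
      intro j; simp [SmatInv, hi]
    rw [Finset.sum_congr rfl (fun j _ => this j), Finset.sum_sub_distrib]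
    simp [Finset.card_univ, mul_inv_cancel₀ (nne n)]

lemma Sinv_mul_S : SmatInv n * Smat n = 1 := by
  ext i j
  rw [Matrix.mul_apply, Matrix.one_apply]
  by_cases hi : i = 0
  · subst hi
    have : ∀ ℓ, SmatInv n 0 ℓ * Smat n ℓ j = ((n:ℝ)+1)⁻¹ * Smat n ℓ j := by
      intro ℓ; simp [SmatInv]
    rw [Finset.sum_congr rfl (fun ℓ _ => this ℓ), ← Finset.mul_sum, S_colsum]
    by_cases hj : j = 0
    · subst hj; simp [inv_mul_cancel₀ (nne n)]
    · simp [hj, Ne.symm hj]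
  · have h1 : ∀ ℓ, SmatInv n i ℓ * Smat n ℓ j
        = (if i = ℓ then Smat n ℓ j else 0) - ((n:ℝ)+1)⁻¹ * Smat n ℓ j := by
      intro ℓ; simp [SmatInv, hi, sub_mul, ite_mul]
    rw [Finset.sum_congr rfl (fun ℓ _ => h1 ℓ), Finset.sum_sub_distrib, ← Finset.mul_sum,
      S_colsum]
    rw [Finset.sum_ite_eq univ i (fun ℓ => Smat n ℓ j), if_pos (Finset.mem_univ i)]
    by_cases hj : j = 0
    · subst hj
      simp [Smat, inv_mul_cancel₀ (nne n), hi]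
    · simp only [if_neg hj, mul_zero, sub_zero]
      simp [Smat, hj, hi]

lemma S_mul_Sinv : Smat n * SmatInv n = 1 :=
  mul_eq_one_comm.mp (Sinv_mul_S n)

variable {n}
variable (AA : Matrix (Fin (n+1)) (Fin (n+1)) ℝ) (d : ℝ)

lemma AS_apply (hrow : ∀ a, ∑ b, AA a b = d) (a : Fin (n+1)) (j : Fin (n+1)) :
    (AA * Smat n) a j = if j = 0 then d else AA a j - AA a 0 := by
  rw [Matrix.mul_apply]
  by_cases hj : j = 0
  · subst hj
    simp only [if_pos rfl]
    rw [← hrow a]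
    exact Finset.sum_congr rfl (fun b _ => by simp [Smat])
  · rw [if_neg hj]
    have : ∀ b, AA a b * Smat n b j
        = AA a b * (if b = j then (1:ℝ) else 0) - AA a b * (if b = 0 then 1 else 0) := by
      intro b; simp [Smat, hj, mul_sub]
    rw [Finset.sum_congr rfl (fun b _ => this b), Finset.sum_sub_distrib]
    simp [Finset.sum_ite_eq' univ]

lemma Mp_row0 (hrow : ∀ a, ∑ b, AA a b = d) (hcol : ∀ b, ∑ a, AA a b = d) (j : Fin (n+1)) :
    (SmatInv n * AA * Smat n) 0 j = if j = 0 then d else 0 := by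
  rw [Matrix.mul_assoc, Matrix.mul_apply]
  have h1 : ∀ a, SmatInv n 0 a * (AA * Smat n) a j = ((n:ℝ)+1)⁻¹ * (AA * Smat n) a j := by
    intro a; simp [SmatInv]
  rw [Finset.sum_congr rfl (fun a _ => h1 a), ← Finset.mul_sum]
  have h2 : ∑ a, (AA * Smat n) a j = if j = 0 then ((n:ℝ)+1) * d else 0 := by
    rw [Finset.sum_congr rfl (fun a (_ : a ∈ univ) => AS_apply AA d hrow a j)]
    by_cases hj : j = 0
    · subst hj
      rw [if_pos rfl, Finset.sum_congr rfl (fun a (_ : a ∈ univ) => if_pos rfl),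
        Finset.sum_const, Finset.card_univ, Fintype.card_fin, nsmul_eq_mul]
      push_cast; ring
    · rw [if_neg hj, Finset.sum_congr rfl (fun a (_ : a ∈ univ) => if_neg hj),
        Finset.sum_sub_distrib, hcol j, hcol 0, sub_self]
  rw [h2]
  by_cases hj : j = 0
  · subst hj; simp [← mul_assoc, inv_mul_cancel₀ (nne n)]
  · simp [hj]

lemma Mp_col0 (hrow : ∀ a, ∑ b, AA a b = d) (i : Fin (n+1)) :
    (SmatInv n * AA * Smat n) i 0 = if i = 0 then d else 0 := by
  rw [Matrix.mul_assoc, Matrix.mul_apply]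
  have h1 : ∀ a, (AA * Smat n) a 0 = d := by
    intro a; rw [AS_apply AA d hrow a 0, if_pos rfl]
  rw [Finset.sum_congr rfl (fun a _ => by rw [h1 a])]
  rw [← Finset.sum_mul, Sinv_rowsum]
  by_cases hi : i = 0 <;> simp [hi]

def Jmat : Matrix (Fin (n+1)) (Fin (n+1)) ℝ := Matrix.of fun _ _ => 1

lemma SinvJS : SmatInv n * Jmat * Smat n
    = Matrix.of fun i j => if i = 0 ∧ j = 0 then ((n:ℝ)+1) else 0 := by
  have hJS : ∀ (a j : Fin (n+1)), ((Jmat : Matrix (Fin (n+1)) (Fin (n+1)) ℝ) * Smat n) a j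
      = if j = 0 then ((n:ℝ)+1) else 0 := by
    intro a j
    rw [Matrix.mul_apply]
    have h1 : ∀ b, (Jmat : Matrix (Fin (n+1)) (Fin (n+1)) ℝ) a b * Smat n b j = Smat n b j := by
      intro b; simp [Jmat]
    rw [Finset.sum_congr rfl (fun b _ => h1 b), S_colsum]
  ext i j
  rw [Matrix.mul_assoc, Matrix.mul_apply]
  rw [Finset.sum_congr rfl (fun a (_ : a ∈ univ) => by rw [hJS a j])]
  rw [← Finset.sum_mul, Sinv_rowsum]
  by_cases hi : i = 0 <;> by_cases hj : j = 0 <;> simp [hi, hj]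

/-- the equiv `Unit ⊕ Fin n ≃ Fin (n+1)` sending `inl` to `0` and `inr i` to `i.succ`. -/
def e1 : (Unit ⊕ Fin n) ≃ Fin (n+1) where
  toFun x := Sum.elim (fun _ => 0) Fin.succ x
  invFun j := Fin.cases (Sum.inl ()) (fun i => Sum.inr i) j
  left_inv x := by rcases x with _ | i <;> simp
  right_inv j := by
    refine Fin.cases ?_ (fun i => ?_) j <;> simp

lemma charpoly_factor (hrow : ∀ a, ∑ b, AA a b = d) (hcol : ∀ b, ∑ a, AA a b = d) :
    AA.charpoly = (X - C d) *
      (Matrix.of fun i j : Fin n => (SmatInv n * AA * Smat n) i.succ j.succ).charpoly := by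
  have h1 : AA.charpoly = (SmatInv n * AA * Smat n).charpoly :=
    (my_charpoly_conj AA (SmatInv n) (Smat n) (Sinv_mul_S n) (S_mul_Sinv n)).symm
  have h2 : Matrix.reindex (e1 (n := n)).symm (e1 (n := n)).symm (SmatInv n * AA * Smat n)
      = Matrix.fromBlocks (Matrix.of fun _ _ : Unit => d) 0 0
          (Matrix.of fun i j : Fin n => (SmatInv n * AA * Smat n) i.succ j.succ) := by
    ext x y
    rcases x with x | i <;> rcases y with y | j <;>
      simp only [Matrix.reindex_apply, Matrix.submatrix_apply, Equiv.symm_symm, e1,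
        Equiv.coe_fn_mk, Sum.elim_inl, Sum.elim_inr, Matrix.fromBlocks_apply₁₁,
        Matrix.fromBlocks_apply₁₂, Matrix.fromBlocks_apply₂₁, Matrix.fromBlocks_apply₂₂,
        Matrix.zero_apply, Matrix.of_apply]
    · rw [Mp_col0 AA d hrow 0, if_pos rfl]
    · rw [Mp_row0 AA d hrow hcol j.succ, if_neg (Fin.succ_ne_zero j)]
    · rw [Mp_col0 AA d hrow i.succ, if_neg (Fin.succ_ne_zero i)]
  have h3 := Matrix.charpoly_reindex (R := ℝ) (e1 (n := n)).symm (SmatInv n * AA * Smat n)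
  rw [h1, ← h3, h2, Matrix.charpoly_fromBlocks_zero₂₁]
  congr 1
  unfold Matrix.charpoly
  rw [Matrix.det_unique]
  simp

end SMat
section PathMat

open Matrix Polynomial Finset Real

variable (k : ℕ) (dd c : ℝ)

def Pk : Matrix (Fin (k+1)) (Fin (k+1)) ℝ :=
  Matrix.of fun p q => if p.val + 1 = q.val ∨ q.val + 1 = p.val then 1 else 0

def Tmat : Matrix (Fin (k+1)) (Fin (k+1)) ℝ :=
  Matrix.of fun p q => (if p = q then dd else 0) + c * Pk k p q

/-- the angle -/
noncomputable def thet (j : Fin (k+1)) : ℝ := ((j.val:ℝ)+1) * Real.pi / ((k:ℝ)+2)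

noncomputable def muT (j : Fin (k+1)) : ℝ := dd + 2 * c * Real.cos (thet k j)

noncomputable def wfun (j : Fin (k+1)) (t : ℕ) : ℝ := Real.sin ((t:ℝ) * thet k j)

lemma wfun_zero (j : Fin (k+1)) : wfun k j 0 = 0 := by simp [wfun]

lemma wfun_top (j : Fin (k+1)) : wfun k j (k+2) = 0 := by
  have hk : ((k:ℝ)+2) ≠ 0 := by positivity
  have h : ((k+2:ℕ):ℝ) * thet k j = ((j.val:ℝ)+1) * Real.pi := by
    unfold thet
    push_cast
    rw [mul_comm]
    exact div_mul_cancel₀ _ hk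
  unfold wfun
  rw [h]
  have h2 := Real.sin_nat_mul_pi (j.val+1)
  push_cast at h2
  exact h2

lemma thet_mem (j : Fin (k+1)) : 0 < thet k j ∧ thet k j < Real.pi := by
  unfold thet
  constructor
  · positivity
  · rw [div_lt_iff₀ (by positivity)]
    have hj' : (j.val+1 : ℕ) < k+2 := by omega
    have hj : (j.val:ℝ) + 1 < (k:ℝ) + 2 := by exact_mod_cast hj'
    have := mul_lt_mul_of_pos_right hj Real.pi_pos
    linarith

lemma sum_Pk_sin (j : Fin (k+1)) (p : Fin (k+1)) :
    ∑ q, Pk k p q * wfun k j (q.val+1) = wfun k j p.val + wfun k j (p.val+2) := by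
  have hsplit : ∀ q : Fin (k+1), Pk k p q * wfun k j (q.val+1)
      = (if q.val + 1 = p.val then wfun k j p.val else 0)
        + (if p.val + 1 = q.val then wfun k j (q.val+1) else 0) := by
    intro q
    unfold Pk
    by_cases h1 : q.val + 1 = p.val <;> by_cases h2 : p.val + 1 = q.val
    · omega
    · simp only [Matrix.of_apply, if_pos (Or.inr h1), if_pos h1, if_neg h2, add_zero, one_mul]
      rw [← h1]
    · simp [h1, h2]
    · simp [h1, h2]
  rw [Finset.sum_congr rfl (fun q _ => hsplit q), Finset.sum_add_distrib]
  congr 1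
  · -- first sum equals wfun k j p.val
    rcases Nat.eq_zero_or_pos p.val with hp | hp
    · rw [Finset.sum_eq_zero (fun q _ => by rw [if_neg (by omega)]), hp, wfun_zero]
    · have hlt : p.val - 1 < k + 1 := by have := p.isLt; omega
      rw [Finset.sum_eq_single ⟨p.val - 1, hlt⟩]
      · rw [if_pos (by simp; omega)]
      · intro q _ hq
        rw [if_neg (fun hc => hq (by apply Fin.ext; simp; omega))]
      · intro h; exact absurd (Finset.mem_univ _) h
  · -- second sum equals wfun k j (p.val+2)
    rcases Nat.lt_or_ge p.val k with hp | hp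
    · have hlt : p.val + 1 < k + 1 := by omega
      rw [Finset.sum_eq_single ⟨p.val + 1, hlt⟩]
      · rw [if_pos (by simp)]
      · intro q _ hq
        rw [if_neg (fun hc => hq (by apply Fin.ext; simp; omega))]
      · intro h; exact absurd (Finset.mem_univ _) h
    · have hpk : p.val = k := by have := p.isLt; omega
      rw [Finset.sum_eq_zero (fun q _ => by rw [if_neg (by have := q.isLt; omega)])]
      rw [hpk, wfun_top]

lemma Tmat_mulVec (j : Fin (k+1)) :
    (Tmat k dd c).mulVec (fun p => wfun k j (p.val+1))
      = muT k dd c j • (fun p => wfun k j (p.val+1)) := by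
  funext p
  rw [Matrix.mulVec, dotProduct]
  have h0 : ∀ q, Tmat k dd c p q * wfun k j (q.val+1)
      = (if p = q then dd * wfun k j (q.val+1) else 0)
        + c * (Pk k p q * wfun k j (q.val+1)) := by
    intro q; unfold Tmat; simp only [Matrix.of_apply]
    by_cases h : p = q <;> simp [h] <;> ring
  rw [Finset.sum_congr rfl (fun q _ => h0 q), Finset.sum_add_distrib, ← Finset.mul_sum,
    sum_Pk_sin]
  rw [Finset.sum_ite_eq univ p (fun q => dd * wfun k j (q.val+1)), if_pos (Finset.mem_univ p)]
  -- now the trig identity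
  have htrig : wfun k j p.val + wfun k j (p.val+2)
      = 2 * Real.cos (thet k j) * wfun k j (p.val+1) := by
    unfold wfun
    have h1 : ((p.val:ℝ)) * thet k j = ((p.val:ℝ)+1) * thet k j - thet k j := by ring
    have h2 : ((p.val:ℝ)+2) * thet k j = ((p.val:ℝ)+1) * thet k j + thet k j := by ring
    push_cast
    rw [h1, h2, Real.sin_sub, Real.sin_add]
    ring
  rw [htrig]
  simp only [Pi.smul_apply, smul_eq_mul, muT]
  ring

lemma muT_inj (hc : 0 < c) : Function.Injective (muT k dd c) := by
  intro j1 j2 h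
  unfold muT at h
  have hcos : Real.cos (thet k j1) = Real.cos (thet k j2) := by
    have h' : 2*c*Real.cos (thet k j1) = 2*c*Real.cos (thet k j2) := by linarith
    exact mul_left_cancel₀ (by positivity : (2*c) ≠ 0) h'
  have hmem : ∀ j, thet k j ∈ Set.Icc 0 Real.pi := by
    intro j
    obtain ⟨h1, h2⟩ := thet_mem k j
    exact ⟨le_of_lt h1, le_of_lt h2⟩
  have hth : thet k j1 = thet k j2 := Real.injOn_cos (hmem j1) (hmem j2) hcos
  unfold thet at hth
  have hk : ((k:ℝ)+2) ≠ 0 := by positivity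
  have h3 : ((j1.val:ℝ)+1) * Real.pi = ((j2.val:ℝ)+1) * Real.pi := by
    have h4 := congrArg (fun x : ℝ => x * ((k:ℝ)+2)) hth
    simpa [div_mul_cancel₀, hk] using h4
  have h5 : ((j1.val:ℝ)+1) = (j2.val:ℝ)+1 := mul_right_cancel₀ Real.pi_ne_zero h3
  have h6 : (j1.val:ℝ) = (j2.val:ℝ) := by linarith
  exact Fin.ext (Nat.cast_injective h6)

lemma Tmat_roots (hc : 0 < c) :
    (Tmat k dd c).charpoly.roots = Finset.univ.val.map (muT k dd c) := by
  apply my_roots_eq _ (Matrix.charpoly_monic _) _ (muT_inj k dd c hc)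
  · rw [Matrix.charpoly_natDegree_eq_dim, Fintype.card_fin]
  · intro j
    apply my_isRoot_charpoly _ _ (fun p => wfun k j (p.val+1))
    · intro h
      have h0 : wfun k j 1 = 0 := congrFun h 0
      have := (thet_mem k j)
      have hpos : 0 < Real.sin (thet k j) := Real.sin_pos_of_pos_of_lt_pi this.1 this.2
      rw [wfun] at h0
      push_cast at h0
      rw [one_mul] at h0
      linarith
    · exact Tmat_mulVec k dd c j

end PathMat
open Matrix Polynomial SimpleGraph

section Main

variable {n k : ℕ}

/-- the reindexing equivalence for the big matrix -/
def E2 (n k : ℕ) : (Fin (k+1)) ⊕ (Fin (k+1) × Fin n) ≃ (Fin (k+1) × Fin (n+1)) where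
  toFun := Sum.elim (fun p => (p, 0)) (fun x => (x.1, x.2.succ))
  invFun x := Fin.cases (Sum.inl x.1) (fun i => Sum.inr (x.1, i)) x.2
  left_inv x := by rcases x with p | ⟨p, i⟩ <;> simp
  right_inv x := by
    obtain ⟨p, j⟩ := x
    refine Fin.cases ?_ (fun i => ?_) j <;> simp

end Main

/-- Energy of the sequential join of `k + 1` copies of a `d`-regular graph on
`n + 1` vertices. -/
theorem stmt_18 (n k : ℕ)
    (G : SimpleGraph (Fin (n + 1))) [DecidableRel G.Adj] (d : ℕ)
    (hreg : G.IsRegularOfDegree d)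
    (lam : Fin n → ℝ)
    (hspec : (G.adjMatrix ℝ).charpoly.roots = (d : ℝ) ::ₘ Finset.univ.val.map lam)
    (G' : Fin (k + 1) → SimpleGraph (Fin (n + 1)))
    (hiso : ∀ p, Nonempty (G ≃g G' p))
    (Gtilde : SimpleGraph (Fin (k + 1) × Fin (n + 1))) [DecidableRel Gtilde.Adj]
    (hGtilde : ∀ x y : Fin (k + 1) × Fin (n + 1),
      Gtilde.Adj x y ↔
        ((x.1 = y.1 ∧ (G' x.1).Adj x.2 y.2)
          ∨ x.1.val + 1 = y.1.val ∨ y.1.val + 1 = x.1.val)) :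
    energy (Gtilde.adjMatrix ℝ)
      = (∑ j : Fin (k + 1),
          |(d : ℝ) + 2 * (n + 1) * Real.cos ((j.val + 1) * Real.pi / (k + 2))|)
        + ∑ j : Fin n, (k + 1) * |lam j| := by
  classical
  set A : Matrix (Fin (n+1)) (Fin (n+1)) ℝ := G.adjMatrix ℝ with hA
  -- row and column sums of A
  have hArow : ∀ a, ∑ b, A a b = (d:ℝ) := by
    intro a
    have h2 : (G.neighborFinset a).card = d := hreg a
    have h3 : ∑ b, A a b = ((Finset.filter (fun b => G.Adj a b) Finset.univ).card : ℝ) := by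
      simp [hA, SimpleGraph.adjMatrix_apply, Finset.sum_boole]
    rw [h3, ← SimpleGraph.neighborFinset_eq_filter, h2]
  have hAcol : ∀ b, ∑ a, A a b = (d:ℝ) := by
    intro b
    have h1 : ∀ a, A a b = A b a := by
      intro a
      simp only [hA, SimpleGraph.adjMatrix_apply]
      exact if_congr (G.adj_comm a b) rfl rfl
    rw [Finset.sum_congr rfl (fun a _ => h1 a)]
    exact hArow b
  -- the isomorphisms and the conjugated copies of A
  set gE : ∀ p : Fin (k+1), Fin (n+1) ≃ Fin (n+1) := fun p => ((hiso p).some).toEquiv with hgE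
  set Ap : Fin (k+1) → Matrix (Fin (n+1)) (Fin (n+1)) ℝ :=
    fun p => A.submatrix ⇑(gE p).symm ⇑(gE p).symm with hApdef
  have hAdj : ∀ p (i j : Fin (n+1)),
      G.Adj ((gE p).symm i) ((gE p).symm j) ↔ (G' p).Adj i j := by
    intro p i j
    have h := ((hiso p).some).map_adj_iff (v := (gE p).symm i) (w := (gE p).symm j)
    have h2 : ((hiso p).some) ((gE p).symm i) = i := (gE p).apply_symm_apply i
    have h3 : ((hiso p).some) ((gE p).symm j) = j := (gE p).apply_symm_apply j
    rw [h2, h3] at h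
    exact h.symm
  have hAp_apply : ∀ p (i j : Fin (n+1)), Ap p i j = if (G' p).Adj i j then (1:ℝ) else 0 := by
    intro p i j
    rw [hApdef]
    simp only [Matrix.submatrix_apply, hA, SimpleGraph.adjMatrix_apply]
    exact if_congr (hAdj p i j) rfl rfl
  have hAprow : ∀ p a, ∑ b, Ap p a b = (d:ℝ) := by
    intro p a
    rw [hApdef]
    simp only [Matrix.submatrix_apply]
    rw [Equiv.sum_comp ((gE p).symm) (fun b => A ((gE p).symm a) b)]
    exact hArow _
  have hApcol : ∀ p b, ∑ a, Ap p a b = (d:ℝ) := by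
    intro p b
    rw [hApdef]
    simp only [Matrix.submatrix_apply]
    rw [Equiv.sum_comp ((gE p).symm) (fun a => A a ((gE p).symm b))]
    exact hAcol _
  -- decomposition of the big adjacency matrix
  have hhat : Gtilde.adjMatrix ℝ = bd Ap
      + Matrix.kroneckerMap (· * ·) (Pk k) (Jmat (n := n)) := by
    ext ⟨p, i⟩ ⟨q, j⟩
    rw [SimpleGraph.adjMatrix_apply, Matrix.add_apply, bd_apply, Matrix.kroneckerMap_apply]
    by_cases hpq : p = q
    · subst hpq
      have hiff : Gtilde.Adj (p, i) (p, j) ↔ (G' p).Adj i j := by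
        rw [hGtilde]
        simp
      rw [if_congr hiff rfl rfl, if_pos rfl, hAp_apply]
      have : Pk k p p = 0 := by
        unfold Pk
        simp only [Matrix.of_apply]
        rw [if_neg (by omega)]
      rw [this, zero_mul, add_zero]
    · have hiff : Gtilde.Adj (p, i) (q, j) ↔ (p.val + 1 = q.val ∨ q.val + 1 = p.val) := by
        rw [hGtilde]
        simp [hpq]
      rw [if_congr hiff rfl rfl, if_neg hpq, zero_add]
      unfold Pk Jmat
      simp only [Matrix.of_apply, mul_one]
  -- the conjugation
  set W : Matrix (Fin (k+1) × Fin (n+1)) (Fin (k+1) × Fin (n+1)) ℝ :=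
    bd (fun _ : Fin (k+1) => Smat n) with hWdef
  set W' : Matrix (Fin (k+1) × Fin (n+1)) (Fin (k+1) × Fin (n+1)) ℝ :=
    bd (fun _ : Fin (k+1) => SmatInv n) with hW'def
  have hWW' : W * W' = 1 := by
    rw [hWdef, hW'def, bd_mul]
    simp only [S_mul_Sinv n]
    exact bd_one
  have hW'W : W' * W = 1 := by
    rw [hWdef, hW'def, bd_mul]
    simp only [Sinv_mul_S n]
    exact bd_one
  have hkronW : W = Matrix.kroneckerMap (· * ·) (1 : Matrix (Fin (k+1)) (Fin (k+1)) ℝ)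
      (Smat n) := by
    ext ⟨p, i⟩ ⟨q, j⟩
    rw [hWdef, bd_apply, Matrix.kroneckerMap_apply, Matrix.one_apply]
    by_cases hpq : p = q <;> simp [hpq]
  have hkronW' : W' = Matrix.kroneckerMap (· * ·) (1 : Matrix (Fin (k+1)) (Fin (k+1)) ℝ)
      (SmatInv n) := by
    ext ⟨p, i⟩ ⟨q, j⟩
    rw [hW'def, bd_apply, Matrix.kroneckerMap_apply, Matrix.one_apply]
    by_cases hpq : p = q <;> simp [hpq]
  have hconj : W' * (Gtilde.adjMatrix ℝ) * W
      = bd (fun p => SmatInv n * Ap p * Smat n)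
        + Matrix.kroneckerMap (· * ·) (Pk k)
            (Matrix.of fun i j : Fin (n+1) => if i = 0 ∧ j = 0 then ((n:ℝ)+1) else 0) := by
    rw [hhat, Matrix.mul_add, Matrix.add_mul]
    congr 1
    · rw [hWdef, hW'def, bd_mul, bd_mul]
    · rw [hkronW, hkronW', ← Matrix.mul_kronecker_mul, ← Matrix.mul_kronecker_mul,
        Matrix.one_mul, Matrix.mul_one, ← SinvJS (n := n), Matrix.mul_assoc]
  -- block structure after reindexing
  have hBrow0 : ∀ p : Fin (k+1), (SmatInv n * Ap p * Smat n) 0 0 = (d:ℝ) := by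
    intro p
    rw [Mp_col0 (Ap p) (d:ℝ) (hAprow p) 0, if_pos rfl]
  have hB0s : ∀ (p : Fin (k+1)) (j : Fin n), (SmatInv n * Ap p * Smat n) 0 j.succ = 0 := by
    intro p j
    rw [Mp_row0 (Ap p) (d:ℝ) (hAprow p) (hApcol p) j.succ, if_neg (Fin.succ_ne_zero j)]
  have hBs0 : ∀ (p : Fin (k+1)) (i : Fin n), (SmatInv n * Ap p * Smat n) i.succ 0 = 0 := by
    intro p i
    rw [Mp_col0 (Ap p) (d:ℝ) (hAprow p) i.succ, if_neg (Fin.succ_ne_zero i)]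
  have hRe : Matrix.reindex (E2 n k).symm (E2 n k).symm (W' * (Gtilde.adjMatrix ℝ) * W)
      = Matrix.fromBlocks (Tmat k (d:ℝ) ((n:ℝ)+1)) 0 0
          (bd (fun p => Matrix.of fun i j : Fin n =>
            (SmatInv n * Ap p * Smat n) i.succ j.succ)) := by
    rw [hconj]
    ext x y
    rcases x with p | ⟨p, i⟩ <;> rcases y with q | ⟨q, j⟩ <;>
      simp only [Matrix.reindex_apply, Matrix.submatrix_apply, Equiv.symm_symm, E2,
        Equiv.coe_fn_mk, Sum.elim_inl, Sum.elim_inr, Matrix.fromBlocks_apply₁₁,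
        Matrix.fromBlocks_apply₁₂, Matrix.fromBlocks_apply₂₁, Matrix.fromBlocks_apply₂₂,
        Matrix.add_apply, bd_apply, Matrix.kroneckerMap_apply, Matrix.of_apply,
        Matrix.zero_apply]
    · -- (inl p, inl q)
      rw [hBrow0 p]
      unfold Tmat Pk
      simp only [Matrix.of_apply]
      by_cases hpq : p = q
      · subst hpq
        simp only [if_pos rfl]
        have : ¬((p.val + 1 = p.val) ∨ (p.val + 1 = p.val)) := by omega
        rw [if_neg this]
        simp
      · simp only [if_neg hpq]
        simp [mul_comm]
    · -- (inl p, inr (q,j))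
      by_cases hpq : p = q
      · subst hpq
        rw [if_pos rfl, hB0s p j]
        simp [Fin.succ_ne_zero j]
      · rw [if_neg hpq]
        simp [Fin.succ_ne_zero j]
    · -- (inr (p,i), inl q)
      by_cases hpq : p = q
      · subst hpq
        rw [if_pos rfl, hBs0 p i]
        simp [Fin.succ_ne_zero i]
      · rw [if_neg hpq]
        simp [Fin.succ_ne_zero i]
    · -- (inr (p,i), inr (q,j))
      simp [Fin.succ_ne_zero i, bd_apply]
  -- characteristic polynomial computations
  have hcp1 : (Gtilde.adjMatrix ℝ).charpoly = (W' * (Gtilde.adjMatrix ℝ) * W).charpoly :=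
    (my_charpoly_conj (Gtilde.adjMatrix ℝ) W' W hW'W hWW').symm
  have hcp2 : (W' * (Gtilde.adjMatrix ℝ) * W).charpoly
      = (Tmat k (d:ℝ) ((n:ℝ)+1)).charpoly * (bd (fun p => Matrix.of fun i j : Fin n =>
          (SmatInv n * Ap p * Smat n) i.succ j.succ)).charpoly := by
    rw [← Matrix.charpoly_reindex (E2 n k).symm (W' * (Gtilde.adjMatrix ℝ) * W), hRe,
      Matrix.charpoly_fromBlocks_zero₂₁]
  have hAcp : A.charpoly
      = (((d:ℝ) ::ₘ Finset.univ.val.map lam).map (fun r => X - C r)).prod := by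
    rw [← hspec]
    refine (prod_multiset_X_sub_C_of_monic_of_roots_card_eq (Matrix.charpoly_monic A) ?_).symm
    rw [hspec, Matrix.charpoly_natDegree_eq_dim, Fintype.card_fin]
    rw [Multiset.card_cons, Multiset.card_map]
    simp
  have hQ0 : ∀ p : Fin (k+1), (Matrix.of fun i j : Fin n =>
      (SmatInv n * Ap p * Smat n) i.succ j.succ).charpoly
      = ((Finset.univ.val.map lam).map (fun r => X - C r)).prod := by
    intro p
    have h1 : (Ap p).charpoly = A.charpoly := by
      have : Ap p = Matrix.reindex (gE p) (gE p) A := by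
        rw [Matrix.reindex_apply, hApdef]
      rw [this, Matrix.charpoly_reindex]
    have h2 := charpoly_factor (Ap p) (d:ℝ) (hAprow p) (hApcol p)
    rw [h1, hAcp, Multiset.map_cons, Multiset.prod_cons] at h2
    exact (mul_left_cancel₀ (X_sub_C_ne_zero (d:ℝ)) h2).symm
  have hbd : (bd (fun p => Matrix.of fun i j : Fin n =>
        (SmatInv n * Ap p * Smat n) i.succ j.succ)).charpoly
      = (((Finset.univ.val.map lam).map (fun r => X - C r)).prod) ^ (k+1) := by
    rw [charpoly_bd, Finset.prod_congr rfl (fun p _ => hQ0 p), Finset.prod_const,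
      Finset.card_univ, Fintype.card_fin]
  have hTroots := Tmat_roots k (d:ℝ) ((n:ℝ)+1) (by positivity)
  have hmonicQ : (((Finset.univ.val.map lam).map (fun r => X - C r)).prod).Monic :=
    Polynomial.monic_multiset_prod_of_monic (Finset.univ.val.map lam) (fun r => X - C r)
      (fun r _ => Polynomial.monic_X_sub_C r)
  have hfinal : (Gtilde.adjMatrix ℝ).charpoly.roots
      = Finset.univ.val.map (muT k (d:ℝ) ((n:ℝ)+1)) + (k+1) • (Finset.univ.val.map lam) := by
    rw [hcp1, hcp2, hbd, Polynomial.roots_mul, hTroots, Polynomial.roots_pow,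
      Polynomial.roots_multiset_prod_X_sub_C]
    exact mul_ne_zero (Matrix.charpoly_monic _).ne_zero (pow_ne_zero _ hmonicQ.ne_zero)
  -- final energy computation
  unfold energy
  rw [hfinal, Multiset.map_add, Multiset.sum_add]
  congr 1
  · rw [Multiset.map_map]
    rfl
  · rw [Multiset.map_nsmul, Multiset.sum_nsmul, Multiset.map_map]
    have h1 : ((Finset.univ.val.map ((fun x => |x|) ∘ lam))).sum
        = ∑ j : Fin n, |lam j| := rfl
    rw [h1, nsmul_eq_mul, ← Finset.mul_sum]
    push_cast
    ring
end

section
/- Let G₁ be the graph on n vertices with no edges and let G₂, ..., G_k be k−1 graphs each isomorphic to G₁. Let G̃ be the graph obtained from G₁, G₂, ..., G_k by connecting each vertex of G_j to every vertex of G_{j+1}, for j = 1, ..., k−1. Then the energy of G̃ equals Σ_{j=1}^{k} |2n cos(jπ/(k+1))|. -/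
open Matrix Polynomial SimpleGraph

/-! The adjacency matrix of the sequential join is the blow-up `(x, y) ↦ P x.1 y.1` of the
adjacency matrix `P` of the path on `k + 1` vertices. It factors as `L * R` with `R * L = n • P`,
and Sylvester's identity `X ^ a * χ(L R) = X ^ b * χ(R L)` shows that both products have the same
nonzero eigenvalues, hence the same energy. The matrix `n • P` has the `k + 1` distinct eigenvalues
`2 n cos (j π / (k + 2))`, with the sine vectors `i ↦ sin (i j π / (k + 2))` as eigenvectors. -/

open Finset

namespace Matrix

variable {ι K : Type*} [Fintype ι] [DecidableEq ι] [CommRing K] [IsDomain K]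

theorem isRoot_charpoly_of_mulVec_eq_smul {M : Matrix ι ι K} {r : K} {v : ι → K}
    (hv : v ≠ 0) (h : M *ᵥ v = r • v) : M.charpoly.IsRoot r := by
  rw [IsRoot, eval_charpoly, ← exists_mulVec_eq_zero_iff]
  exact ⟨v, hv, by simp [sub_mulVec, h]⟩

theorem charpoly_roots_eq_of_injective (M : Matrix ι ι K) {c : ι → K}
    (hc : Function.Injective c) (hroot : ∀ i, M.charpoly.IsRoot (c i)) :
    M.charpoly.roots = univ.val.map c := by
  have hnodup : (univ.val.map c).Nodup := univ.nodup.map hc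
  refine (Multiset.eq_of_le_of_card_le ?_ ?_).symm
  · rw [Multiset.le_iff_subset hnodup]
    rintro _ hx
    obtain ⟨i, -, rfl⟩ := Multiset.mem_map.1 hx
    exact (mem_roots M.charpoly_monic.ne_zero).2 (hroot i)
  · simpa [charpoly_natDegree_eq_dim] using card_roots' M.charpoly

end Matrix

theorem sum_abs_roots_X_pow_mul (a : ℕ) {p : ℝ[X]} (hp : p ≠ 0) :
    ((X ^ a * p).roots.map fun x => |x|).sum = (p.roots.map fun x => |x|).sum := by
  rw [roots_mul (mul_ne_zero (pow_ne_zero a X_ne_zero) hp), roots_X_pow]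
  simp [Multiset.nsmul_singleton]

theorem energy_mul_comm {m n : Type*} [Fintype m] [DecidableEq m] [Fintype n] [DecidableEq n]
    (A : Matrix m n ℝ) (B : Matrix n m ℝ) : energy (A * B) = energy (B * A) := by
  have h := congrArg (fun p : ℝ[X] => (p.roots.map fun x => |x|).sum) (charpoly_mul_comm' A B)
  simpa only [energy, sum_abs_roots_X_pow_mul _ (charpoly_monic _).ne_zero] using h

theorem energy_blowup {ι κ : Type*} [Fintype ι] [DecidableEq ι] [Fintype κ] [DecidableEq κ]
    (P : Matrix ι ι ℝ) :
    energy (of fun x y : ι × κ => P x.1 y.1) = energy ((Fintype.card κ : ℝ) • P) := by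
  let L : Matrix (ι × κ) ι ℝ := of fun x i => P x.1 i
  let R : Matrix ι (ι × κ) ℝ := of fun i y => if i = y.1 then 1 else 0
  have hLR : L * R = of fun x y : ι × κ => P x.1 y.1 := by
    ext x y
    simp [L, R, mul_apply]
  have hRL : R * L = (Fintype.card κ : ℝ) • P := by
    ext i j
    simp [L, R, mul_apply, Fintype.sum_prod_type]
  rw [← hLR, ← hRL, energy_mul_comm]

instance (m : ℕ) : DecidableRel (pathGraph m).Adj :=
  fun _ _ => decidable_of_iff' _ pathGraph_adj

theorem pathGraph_adjMatrix_mulVec {R : Type*} [NonAssocSemiring R] (m : ℕ) (f : ℕ → R)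
    (h0 : f 0 = 0) (hm : f (m + 1) = 0) :
    (pathGraph m).adjMatrix R *ᵥ (fun i => f (i + 1)) = fun i : Fin m => f i + f (i + 2) := by
  ext ⟨i, hi⟩
  simp only [mulVec, dotProduct, adjMatrix_apply, pathGraph_adj, ite_mul, one_mul, zero_mul]
  rw [Fin.sum_univ_eq_sum_range (fun q => if i + 1 = q ∨ q + 1 = i then f (q + 1) else 0),
    sum_eq_add (i - 1) (i + 1) (by omega) (fun q _ hq => if_neg (by omega))]
  · rcases i with _ | j
    · simp [h0]
    · simp
  · exact fun h => absurd (mem_range.2 (by omega)) h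
  · intro h; simp [show i + 1 = m by simp at h; omega, hm]

theorem pathGraph_adjMatrix_mulVec_sin (m : ℕ) {θ : ℝ} (hθ : Real.sin ((m + 1) * θ) = 0) :
    (pathGraph m).adjMatrix ℝ *ᵥ (fun i => Real.sin ((i + 1) * θ))
      = (2 * Real.cos θ) • fun i : Fin m => Real.sin ((i + 1) * θ) := by
  have h := pathGraph_adjMatrix_mulVec m (fun t : ℕ => Real.sin (t * θ)) (by simp) (mod_cast hθ)
  push_cast at h
  rw [h]
  ext i
  have hshift : ∀ t : ℝ, Real.sin (t * θ) + Real.sin ((t + 2) * θ)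
      = 2 * Real.cos θ * Real.sin ((t + 1) * θ) := by
    intro t
    rw [show t * θ = (t + 1) * θ - θ by ring, show (t + 2) * θ = (t + 1) * θ + θ by ring,
      Real.sin_add, Real.sin_sub]
    ring
  simp [hshift]

theorem energy_smul_pathGraph_adjMatrix (m : ℕ) {c : ℝ} (hc : c ≠ 0) :
    energy (c • (pathGraph m).adjMatrix ℝ)
      = ∑ j : Fin m, |2 * c * Real.cos ((j + 1) * Real.pi / (m + 1))| := by
  set θ : Fin m → ℝ := fun j => (j + 1) * Real.pi / (m + 1)
  have hθ_pos : ∀ j, 0 < θ j := fun j => by positivity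
  have hθ_lt : ∀ j, θ j < Real.pi := fun j => by
    rw [div_lt_iff₀ (by positivity)]
    have : (j : ℝ) + 1 < m + 1 := by exact_mod_cast Nat.succ_lt_succ j.isLt
    nlinarith [Real.pi_pos]
  have hinj : Function.Injective fun j => 2 * c * Real.cos (θ j) := by
    intro i j hij
    have hcos := mul_left_cancel₀ (by positivity : 2 * c ≠ 0) hij
    have := Real.injOn_cos ⟨(hθ_pos i).le, (hθ_lt i).le⟩ ⟨(hθ_pos j).le, (hθ_lt j).le⟩ hcos
    have hij : (i : ℝ) = j := by
      simpa [θ, Real.pi_ne_zero, div_left_inj' (by positivity : (m : ℝ) + 1 ≠ 0)] using this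
    exact Fin.ext (by exact_mod_cast hij)
  have hroot : ∀ j, (c • (pathGraph m).adjMatrix ℝ).charpoly.IsRoot (2 * c * Real.cos (θ j)) := by
    intro j
    have hsin : Real.sin ((m + 1) * θ j) = 0 := by
      rw [show (m + 1) * θ j = ((j + 1 : ℕ) : ℝ) * Real.pi by simp only [θ]; push_cast; field_simp]
      exact Real.sin_nat_mul_pi _
    refine isRoot_charpoly_of_mulVec_eq_smul (v := fun i : Fin m => Real.sin ((i + 1) * θ j))
      (fun hv => ?_) ?_
    · have hv0 := congrFun hv ⟨0, j.pos⟩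
      simp only [CharP.cast_eq_zero, zero_add, one_mul, Pi.zero_apply] at hv0
      exact (Real.sin_pos_of_pos_of_lt_pi (hθ_pos j) (hθ_lt j)).ne' hv0
    · rw [smul_mulVec, pathGraph_adjMatrix_mulVec_sin m hsin, smul_smul]
      ring_nf
  rw [energy, charpoly_roots_eq_of_injective _ hinj hroot, Multiset.map_map]
  rfl

/-- Energy of the sequential join of `k + 1` edgeless graphs on `n` vertices. -/
theorem stmt_19 (n k : ℕ)
    (G' : Fin (k + 1) → SimpleGraph (Fin n))
    (hedge : ∀ p, Nonempty (G' p ≃g (⊥ : SimpleGraph (Fin n))))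
    (Gtilde : SimpleGraph (Fin (k + 1) × Fin n)) [DecidableRel Gtilde.Adj]
    (hGtilde : ∀ x y : Fin (k + 1) × Fin n,
      Gtilde.Adj x y ↔
        ((x.1 = y.1 ∧ (G' x.1).Adj x.2 y.2)
          ∨ x.1.val + 1 = y.1.val ∨ y.1.val + 1 = x.1.val)) :
    energy (Gtilde.adjMatrix ℝ)
      = ∑ j : Fin (k + 1), |2 * (n : ℝ) * Real.cos ((j.val + 1) * Real.pi / (k + 2))| := by
  rcases n with _ | n
  · simp [energy]
  have hnoedge : ∀ p a b, ¬ (G' p).Adj a b := fun p a b h => by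
    simpa using (hedge p).some.map_adj_iff.mpr h
  have hadj : Gtilde.adjMatrix ℝ = of fun x y => (pathGraph (k + 1)).adjMatrix ℝ x.1 y.1 := by
    ext x y
    simp [adjMatrix_apply, hGtilde, hnoedge, pathGraph_adj]
  rw [hadj, energy_blowup, Fintype.card_fin,
    energy_smul_pathGraph_adjMatrix _ (by positivity)]
  push_cast [add_assoc, one_add_one_eq_two]
  rfl
end
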